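/- arXiv:1210.7013 — 8 statements merged into one kernel-verified Lean document; each statement's English description precedes it below -/
import Mathlib

section
/- For the triangle case of the generalized Hölder inequality: for any measurable functions f₁, f₂, f₃ : [0,1]² → ℝ, one has (∫_{[0,1]³} f₁(x,y) f₂(y,z) f₃(x,z) dx dy dz)² ≤ ∏_{i=1}^{3} ∫_{[0,1]²} fᵢ(x,y)² dx dy. -/
open MeasureTheory unitInterval
open scoped ENNReal

/-!
Integrating out `z` first, the triple integral becomes `∫ f₁(x,y) G(x,y)` with
`G(x,y) = ∫ f₂(y,z) f₃(x,z) dz`. Cauchy–Schwarz in `(x,y)` bounds its square by `‖f₁‖₂² ‖G‖₂²`,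
and Cauchy–Schwarz in `z` gives `G(x,y)² ≤ (∫ f₂(y,·)²)(∫ f₃(x,·)²)`, whose integral over `(x,y)`
splits as `‖f₂‖₂² ‖f₃‖₂²`. Working with `‖fᵢ‖ₑ` in `ℝ≥0∞` makes Tonelli available throughout.
-/

theorem sq_lintegral_mul_le {α : Type*} [MeasurableSpace α] {μ : Measure α} {f g : α → ℝ≥0∞}
    (hf : AEMeasurable f μ) (hg : AEMeasurable g μ) :
    (∫⁻ a, f a * g a ∂μ) ^ 2 ≤ (∫⁻ a, f a ^ 2 ∂μ) * ∫⁻ a, g a ^ 2 ∂μ := by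
  have hölder := ENNReal.lintegral_mul_le_Lp_mul_Lq μ Real.HolderConjugate.two_two hf hg
  have sq_rpow_half : ∀ x : ℝ≥0∞, (x ^ (1 / 2 : ℝ)) ^ 2 = x := fun x => by
    rw [← ENNReal.rpow_two, ← ENNReal.rpow_mul]; norm_num
  simp only [ENNReal.rpow_two] at hölder
  calc (∫⁻ a, f a * g a ∂μ) ^ 2
      ≤ ((∫⁻ a, f a ^ 2 ∂μ) ^ (1 / 2 : ℝ) * (∫⁻ a, g a ^ 2 ∂μ) ^ (1 / 2 : ℝ)) ^ 2 := by
        gcongr; exact hölder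
    _ = (∫⁻ a, f a ^ 2 ∂μ) * ∫⁻ a, g a ^ 2 ∂μ := by rw [mul_pow, sq_rpow_half, sq_rpow_half]

section Triangle

variable {α β γ : Type*} [MeasurableSpace α] [MeasurableSpace β] [MeasurableSpace γ]
  {μ : Measure α} {ν : Measure β} {ρ : Measure γ} [SFinite ν] [SFinite ρ]

theorem lintegral_prod_prod_eq_lintegral_lintegral {F : α × β × γ → ℝ≥0∞} (hF : Measurable F) :
    ∫⁻ w, F w ∂μ.prod (ν.prod ρ) = ∫⁻ p, ∫⁻ z, F (p.1, p.2, z) ∂ρ ∂μ.prod ν := by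
  rw [← (measurePreserving_prodAssoc μ ν ρ).lintegral_comp hF]
  exact lintegral_prod _ (hF.comp MeasurableEquiv.prodAssoc.measurable).aemeasurable

variable {g₁ : α → β → ℝ≥0∞} {g₂ : β → γ → ℝ≥0∞} {g₃ : α → γ → ℝ≥0∞}

theorem lintegral_triangle_eq (h₁ : Measurable (fun p : α × β => g₁ p.1 p.2))
    (h₂ : Measurable (fun q : β × γ => g₂ q.1 q.2)) (h₃ : Measurable (fun q : α × γ => g₃ q.1 q.2)) :
    ∫⁻ w, g₁ w.1 w.2.1 * g₂ w.2.1 w.2.2 * g₃ w.1 w.2.2 ∂μ.prod (ν.prod ρ)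
      = ∫⁻ p, g₁ p.1 p.2 * ∫⁻ z, g₂ p.2 z * g₃ p.1 z ∂ρ ∂μ.prod ν := by
  rw [lintegral_prod_prod_eq_lintegral_lintegral (by fun_prop)]
  refine lintegral_congr fun p => ?_
  rw [← lintegral_const_mul _ (by fun_prop)]
  simp only [mul_assoc]

theorem lintegral_sq_lintegral_mul_le [SFinite μ] (h₂ : Measurable (fun q : β × γ => g₂ q.1 q.2))
    (h₃ : Measurable (fun q : α × γ => g₃ q.1 q.2)) :
    ∫⁻ p, (∫⁻ z, g₂ p.2 z * g₃ p.1 z ∂ρ) ^ 2 ∂μ.prod ν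
      ≤ (∫⁻ q, g₂ q.1 q.2 ^ 2 ∂ν.prod ρ) * ∫⁻ q, g₃ q.1 q.2 ^ 2 ∂μ.prod ρ :=
  calc ∫⁻ p, (∫⁻ z, g₂ p.2 z * g₃ p.1 z ∂ρ) ^ 2 ∂μ.prod ν
      ≤ ∫⁻ p, (∫⁻ z, g₃ p.1 z ^ 2 ∂ρ) * ∫⁻ z, g₂ p.2 z ^ 2 ∂ρ ∂μ.prod ν := by
        refine lintegral_mono fun p => ?_
        rw [mul_comm]
        exact sq_lintegral_mul_le (by fun_prop) (by fun_prop)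
    _ = (∫⁻ x, ∫⁻ z, g₃ x z ^ 2 ∂ρ ∂μ) * ∫⁻ y, ∫⁻ z, g₂ y z ^ 2 ∂ρ ∂ν :=
        lintegral_prod_mul (h₃.pow_const 2).lintegral_prod_right'.aemeasurable
          (h₂.pow_const 2).lintegral_prod_right'.aemeasurable
    _ = (∫⁻ q, g₂ q.1 q.2 ^ 2 ∂ν.prod ρ) * ∫⁻ q, g₃ q.1 q.2 ^ 2 ∂μ.prod ρ := by
        rw [mul_comm, lintegral_prod _ (by fun_prop), lintegral_prod _ (by fun_prop)]

theorem sq_lintegral_triangle_le [SFinite μ] (h₁ : Measurable (fun p : α × β => g₁ p.1 p.2))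
    (h₂ : Measurable (fun q : β × γ => g₂ q.1 q.2)) (h₃ : Measurable (fun q : α × γ => g₃ q.1 q.2)) :
    (∫⁻ w, g₁ w.1 w.2.1 * g₂ w.2.1 w.2.2 * g₃ w.1 w.2.2 ∂μ.prod (ν.prod ρ)) ^ 2
      ≤ (∫⁻ p, g₁ p.1 p.2 ^ 2 ∂μ.prod ν) * (∫⁻ q, g₂ q.1 q.2 ^ 2 ∂ν.prod ρ)
        * ∫⁻ q, g₃ q.1 q.2 ^ 2 ∂μ.prod ρ := by
  rw [lintegral_triangle_eq h₁ h₂ h₃, mul_assoc]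
  calc _ ≤ (∫⁻ p, g₁ p.1 p.2 ^ 2 ∂μ.prod ν)
          * ∫⁻ p, (∫⁻ z, g₂ p.2 z * g₃ p.1 z ∂ρ) ^ 2 ∂μ.prod ν :=
        sq_lintegral_mul_le h₁.aemeasurable (by fun_prop)
    _ ≤ _ := by gcongr; exact lintegral_sq_lintegral_mul_le h₂ h₃

end Triangle

theorem ofReal_integral_sq_eq_lintegral_enorm_sq {α : Type*} [MeasurableSpace α] {μ : Measure α}
    {f : α → ℝ} (hf : Integrable (fun a => f a ^ 2) μ) :
    ENNReal.ofReal (∫ a, f a ^ 2 ∂μ) = ∫⁻ a, ‖f a‖ₑ ^ 2 ∂μ := by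
  rw [ofReal_integral_eq_lintegral_ofReal hf (ae_of_all _ fun _ => sq_nonneg _)]
  simp only [← enorm_pow, Real.enorm_of_nonneg (sq_nonneg _)]

theorem sq_integral_triangle_le {α β γ : Type*} [MeasurableSpace α] [MeasurableSpace β]
    [MeasurableSpace γ] {μ : Measure α} {ν : Measure β} {ρ : Measure γ}
    [SFinite μ] [SFinite ν] [SFinite ρ] {f₁ : α → β → ℝ} {f₂ : β → γ → ℝ} {f₃ : α → γ → ℝ}
    (hm₁ : Measurable (fun p : α × β => f₁ p.1 p.2)) (hm₂ : Measurable (fun q : β × γ => f₂ q.1 q.2))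
    (hm₃ : Measurable (fun q : α × γ => f₃ q.1 q.2))
    (hi₁ : Integrable (fun p : α × β => f₁ p.1 p.2 ^ 2) (μ.prod ν))
    (hi₂ : Integrable (fun q : β × γ => f₂ q.1 q.2 ^ 2) (ν.prod ρ))
    (hi₃ : Integrable (fun q : α × γ => f₃ q.1 q.2 ^ 2) (μ.prod ρ)) :
    (∫ w, f₁ w.1 w.2.1 * f₂ w.2.1 w.2.2 * f₃ w.1 w.2.2 ∂μ.prod (ν.prod ρ)) ^ 2
      ≤ (∫ p, f₁ p.1 p.2 ^ 2 ∂μ.prod ν) * (∫ q, f₂ q.1 q.2 ^ 2 ∂ν.prod ρ)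
        * ∫ q, f₃ q.1 q.2 ^ 2 ∂μ.prod ρ := by
  have key := sq_lintegral_triangle_le (μ := μ) (ν := ν) (ρ := ρ) (g₁ := fun x y => ‖f₁ x y‖ₑ)
    (g₂ := fun y z => ‖f₂ y z‖ₑ) (g₃ := fun x z => ‖f₃ x z‖ₑ) hm₁.enorm hm₂.enorm hm₃.enorm
  rw [← ofReal_integral_sq_eq_lintegral_enorm_sq hi₁, ← ofReal_integral_sq_eq_lintegral_enorm_sq hi₂,
    ← ofReal_integral_sq_eq_lintegral_enorm_sq hi₃, ← ENNReal.ofReal_mul (by positivity),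
    ← ENNReal.ofReal_mul (by positivity)] at key
  rw [← ENNReal.ofReal_le_ofReal_iff (by positivity), ← Real.enorm_of_nonneg (sq_nonneg _),
    enorm_pow]
  calc _ ≤ (∫⁻ w, ‖f₁ w.1 w.2.1 * f₂ w.2.1 w.2.2 * f₃ w.1 w.2.2‖ₑ ∂μ.prod (ν.prod ρ)) ^ 2 := by
        gcongr; exact enorm_integral_le_lintegral_enorm _
    _ ≤ _ := by simpa only [enorm_mul] using key

/-- **Triangle case of the generalized Hölder inequality**:
`(∫ f₁(x,y) f₂(y,z) f₃(x,z) dx dy dz)² ≤ ∏ᵢ ∫ fᵢ²`. -/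
theorem triangle_holder
    (f₁ f₂ f₃ : I → I → ℝ)
    (hm₁ : Measurable (fun z : I × I => f₁ z.1 z.2))
    (hm₂ : Measurable (fun z : I × I => f₂ z.1 z.2))
    (hm₃ : Measurable (fun z : I × I => f₃ z.1 z.2))
    (hi₁ : Integrable (fun z : I × I => (f₁ z.1 z.2) ^ 2))
    (hi₂ : Integrable (fun z : I × I => (f₂ z.1 z.2) ^ 2))
    (hi₃ : Integrable (fun z : I × I => (f₃ z.1 z.2) ^ 2)) :
    (∫ w : I × I × I, f₁ w.1 w.2.1 * f₂ w.2.1 w.2.2 * f₃ w.1 w.2.2) ^ 2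
      ≤ (∫ z : I × I, (f₁ z.1 z.2) ^ 2) * (∫ z : I × I, (f₂ z.1 z.2) ^ 2)
        * (∫ z : I × I, (f₃ z.1 z.2) ^ 2) :=
  sq_integral_triangle_le hm₁ hm₂ hm₃ hi₁ hi₂ hi₃
end

section
/- Let H be a finite simple graph with maximum degree at most d (d ≥ 1), and let f : [0,1]² → ℝ be a bounded symmetric measurable function. Then t(H, f) ≤ ‖f‖_d^{e(H)}, where t(H,f) = ∫ ∏_{(i,j)∈E(H)} f(x_i,x_j) dx₁⋯dx_m (m = |V(H)|), e(H) is the number of edges of H, and ‖f‖_d = (∫ |f|^d)^{1/d}. -/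
/-
Finner's inequality, proved by integrating out the vertex variables one at a time. For a set `s`
of vertices, keep `F` on the edges inside `s`, replace an edge `uw` with only `u ∈ s` by the
`L^p`-norm of `F` in its other variable, evaluated at `x_u`, and replace the edges missing `s`
by `1`. Integrating this product over the variables in `s` costs at most `‖F‖_p` per edge
meeting `s`. To add a vertex `v`, integrate `x_v` first: at most `p` factors contain `x_v`, and
Hölder's inequality on the probability space (the leftover exponent going to the constant `1`)
turns each edge `vu` with `u ∈ s` into the norm at `x_u` and each other edge at `v` into `‖F‖_p`.
For `s = univ` the product is `∏ F`, and `t(H, f) ≤ ∫ ∏ |f|`.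
-/

open MeasureTheory unitInterval

/-- The homomorphism density `t(H, f)` of a finite simple graph `H` in a kernel
`f : [0,1]² → ℝ`. -/
noncomputable def homDensity {m : ℕ} (H : SimpleGraph (Fin m)) [DecidableRel H.Adj]
    (f : I → I → ℝ) : ℝ :=
  ∫ x : Fin m → I,
    ∏ e ∈ Finset.univ.filter (fun e : Fin m × Fin m => e.1 < e.2 ∧ H.Adj e.1 e.2),
      f (x e.1) (x e.2)

open Finset ENNReal Function

section Holder
variable {α ι : Type*} [MeasurableSpace α] {μ : Measure α}

theorem lintegral_prod_le_prod_lintegral_rpow [IsProbabilityMeasure μ] (s : Finset ι)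
    {f : ι → α → ℝ≥0∞} (hf : ∀ i ∈ s, AEMeasurable (f i) μ) {p : ℝ} (hp : 0 < p)
    (hs : (#s : ℝ) ≤ p) :
    ∫⁻ a, ∏ i ∈ s, f i a ∂μ ≤ ∏ i ∈ s, (∫⁻ a, f i a ^ p ∂μ) ^ (1 / p) := by
  have hq : 0 ≤ 1 - ∑ _i ∈ s, 1 / p := by
    rw [sum_const, nsmul_eq_mul, ← div_eq_mul_one_div, sub_nonneg]
    exact div_le_one_of_le₀ hs hp.le
  have key := lintegral_mul_prod_norm_pow_le s (g := fun _ => 1) aemeasurable_const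
    (fun i hi => (hf i hi).pow_const p) _ (sub_add_cancel 1 _) hq (fun _ _ => by positivity)
  simpa [← rpow_mul, mul_inv_cancel₀ hp.ne'] using key
end Holder

section Finner

variable {α ι : Type*} [MeasurableSpace α] (μ : Measure α) (F : α → α → ℝ≥0∞) (p : ℝ)

noncomputable def rowLpNorm (a : α) : ℝ≥0∞ := (∫⁻ b, F a b ^ p ∂μ) ^ (1 / p)

noncomputable def colLpNorm (b : α) : ℝ≥0∞ := (∫⁻ a, F a b ^ p ∂μ) ^ (1 / p)

noncomputable def kernelLpNorm : ℝ≥0∞ := (∫⁻ z, F z.1 z.2 ^ p ∂μ.prod μ) ^ (1 / p)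

variable {μ F p} in
theorem kernelLpNorm_ne_top [IsFiniteMeasure μ] (hp : 0 ≤ p) {C : ℝ≥0∞} (hC : C ≠ ⊤)
    (hFC : ∀ a b, F a b ≤ C) : kernelLpNorm μ F p ≠ ⊤ := by
  refine rpow_ne_top_of_nonneg (by positivity) (ne_top_of_le_ne_top ?_
    (lintegral_mono fun z => rpow_le_rpow (hFC z.1 z.2) hp))
  rw [lintegral_const]
  exact mul_ne_top (rpow_ne_top_of_nonneg hp hC) (measure_ne_top _ _)

variable {μ p} in
theorem toReal_kernelLpNorm_enorm [SFinite μ] {f : α → α → ℝ} (hf : Measurable (uncurry f))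
    (hp : 0 ≤ p) :
    (kernelLpNorm μ (fun a b => ‖f a b‖ₑ) p).toReal =
      (∫ z, |f z.1 z.2| ^ p ∂μ.prod μ) ^ (1 / p) := by
  rw [kernelLpNorm, ← toReal_rpow, integral_eq_lintegral_of_nonneg_ae
    (f := fun z : α × α => |f z.1 z.2| ^ p) (ae_of_all _ fun z => by positivity)
    (hf.abs.pow_const _).aestronglyMeasurable]
  congr 2
  refine lintegral_congr fun z => ?_
  rw [← ofReal_rpow_of_nonneg (abs_nonneg _) hp, ← Real.enorm_eq_ofReal_abs]

variable [DecidableEq ι]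

noncomputable def edgeFactor (s : Finset ι) (e : ι × ι) (x : ι → α) : ℝ≥0∞ :=
  if e.1 ∈ s then (if e.2 ∈ s then F (x e.1) (x e.2) else rowLpNorm μ F p (x e.1))
  else if e.2 ∈ s then colLpNorm μ F p (x e.2) else 1

noncomputable def edgeProduct (E : Finset (ι × ι)) (s : Finset ι) (x : ι → α) : ℝ≥0∞ :=
  ∏ e ∈ E, edgeFactor μ F p s e x

variable {μ F p}

theorem edgeFactor_insert_update_of_ne {s : Finset ι} {e : ι × ι} {v : ι} (h1 : e.1 ≠ v)
    (h2 : e.2 ≠ v) (y : ι → α) (t : α) :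
    edgeFactor μ F p (insert v s) e (update y v t) = edgeFactor μ F p s e y := by
  simp [edgeFactor, h1, h2]

theorem edgeFactor_eq_one {s : Finset ι} {e : ι × ι} (h : ¬(e.1 ∈ s ∨ e.2 ∈ s))
    (x : ι → α) : edgeFactor μ F p s e x = 1 := by
  simp_all [edgeFactor]

theorem edgeProduct_insert_update {E : Finset (ι × ι)} {s : Finset ι} {v : ι} (y : ι → α)
    (t : α) :
    edgeProduct μ F p E (insert v s) (update y v t) =
      (∏ e ∈ E with ¬(e.1 = v ∨ e.2 = v), edgeFactor μ F p s e y) *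
        ∏ e ∈ E with e.1 = v ∨ e.2 = v, edgeFactor μ F p (insert v s) e (update y v t) := by
  rw [edgeProduct, ← prod_filter_mul_prod_filter_not E (fun e => e.1 = v ∨ e.2 = v), mul_comm]
  congr 1
  refine prod_congr rfl fun e he => ?_
  obtain ⟨h1, h2⟩ := not_or.mp (mem_filter.mp he).2
  exact edgeFactor_insert_update_of_ne h1 h2 y t

theorem card_filter_meets_insert (E : Finset (ι × ι)) (s : Finset ι) (v : ι) :
    #{e ∈ E | e.1 ∈ insert v s ∨ e.2 ∈ insert v s} =
      #{e ∈ E | e.1 ∈ s ∨ e.2 ∈ s} + #{e ∈ E | (e.1 = v ∨ e.2 = v) ∧ ¬(e.1 ∈ s ∨ e.2 ∈ s)} := by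
  rw [← card_union_of_disjoint (disjoint_filter.mpr fun _ _ h h' => h'.2 h)]
  congr 1
  ext e
  simp only [mem_filter, mem_union, mem_insert]
  tauto

variable [SFinite μ]

theorem lintegral_rowLpNorm_rpow (hp : p ≠ 0) (hF : Measurable (uncurry F)) :
    ∫⁻ a, rowLpNorm μ F p a ^ p ∂μ = ∫⁻ z, F z.1 z.2 ^ p ∂μ.prod μ := by
  simp_rw [rowLpNorm, ← rpow_mul, one_div_mul_cancel hp, rpow_one]
  exact (lintegral_prod _ (hF.pow_const p).aemeasurable).symm

theorem lintegral_colLpNorm_rpow (hp : p ≠ 0) (hF : Measurable (uncurry F)) :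
    ∫⁻ b, colLpNorm μ F p b ^ p ∂μ = ∫⁻ z, F z.1 z.2 ^ p ∂μ.prod μ := by
  simp_rw [colLpNorm, ← rpow_mul, one_div_mul_cancel hp, rpow_one]
  exact (lintegral_prod_symm _ (hF.pow_const p).aemeasurable).symm

theorem measurable_edgeFactor (hF : Measurable (uncurry F)) (s : Finset ι) (e : ι × ι) :
    Measurable (edgeFactor μ F p s e) := by
  have hrow : Measurable (rowLpNorm μ F p) :=
    ((hF.pow_const p).lintegral_prod_right').pow_const _
  have hcol : Measurable (colLpNorm μ F p) :=
    ((hF.comp measurable_swap).pow_const p).lintegral_prod_right'.pow_const _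
  unfold edgeFactor
  split_ifs
  · exact hF.comp (f := fun x : ι → α => (x e.1, x e.2)) (by fun_prop)
  · exact hrow.comp (measurable_pi_apply e.1)
  · exact hcol.comp (measurable_pi_apply e.2)
  · exact measurable_const

theorem measurable_edgeProduct (hF : Measurable (uncurry F)) (E : Finset (ι × ι))
    (s : Finset ι) : Measurable (edgeProduct μ F p E s) :=
  Finset.measurable_prod _ fun e _ => measurable_edgeFactor hF s e

theorem lintegral_edgeFactor_insert_update_rpow (hp : p ≠ 0) (hF : Measurable (uncurry F))
    {s : Finset ι} {e : ι × ι} {v : ι} (he : e.1 ≠ e.2) (hev : e.1 = v ∨ e.2 = v)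
    (hv : v ∉ s) (y : ι → α) :
    (∫⁻ t, edgeFactor μ F p (insert v s) e (update y v t) ^ p ∂μ) ^ (1 / p) =
      if e.1 ∈ s ∨ e.2 ∈ s then edgeFactor μ F p s e y else kernelLpNorm μ F p := by
  obtain ⟨a, b⟩ := e
  rcases hev with rfl | rfl
  · have hb : b ≠ a := Ne.symm he
    by_cases hbs : b ∈ s
    · simp [edgeFactor, hb, hbs, hv, colLpNorm]
    · simp [edgeFactor, hb, hbs, hv, kernelLpNorm, lintegral_rowLpNorm_rpow hp hF]
  · by_cases has : a ∈ s
    · simp [edgeFactor, he, has, hv, rowLpNorm]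
    · simp [edgeFactor, he, has, hv, kernelLpNorm, lintegral_colLpNorm_rpow hp hF]

theorem lintegral_prod_incident_edgeFactor_le [IsProbabilityMeasure μ] (hp : 0 < p)
    (hF : Measurable (uncurry F)) {E : Finset (ι × ι)} (hE : ∀ e ∈ E, e.1 ≠ e.2) {v : ι}
    (hdeg : (#{e ∈ E | e.1 = v ∨ e.2 = v} : ℝ) ≤ p) {s : Finset ι} (hv : v ∉ s)
    (y : ι → α) :
    ∫⁻ t, ∏ e ∈ E with e.1 = v ∨ e.2 = v, edgeFactor μ F p (insert v s) e (update y v t) ∂μ ≤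
      (∏ e ∈ E with e.1 = v ∨ e.2 = v, edgeFactor μ F p s e y) *
        kernelLpNorm μ F p ^ #{e ∈ E | (e.1 = v ∨ e.2 = v) ∧ ¬(e.1 ∈ s ∨ e.2 ∈ s)} := by
  calc _ ≤ ∏ e ∈ E with e.1 = v ∨ e.2 = v,
          (∫⁻ t, edgeFactor μ F p (insert v s) e (update y v t) ^ p ∂μ) ^ (1 / p) :=
        lintegral_prod_le_prod_lintegral_rpow _ (fun e _ =>
          ((measurable_edgeFactor hF _ e).comp (measurable_update y)).aemeasurable) hp hdeg
    _ = ∏ e ∈ E with e.1 = v ∨ e.2 = v,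
          if e.1 ∈ s ∨ e.2 ∈ s then edgeFactor μ F p s e y else kernelLpNorm μ F p := by
        refine prod_congr rfl fun e he => ?_
        obtain ⟨heE, hev⟩ := mem_filter.mp he
        exact lintegral_edgeFactor_insert_update_rpow hp.ne' hF (hE e heE) hev hv y
    _ = _ := by
        rw [prod_ite, ← prod_filter_mul_prod_filter_not (E.filter _) (fun e => e.1 ∈ s ∨ e.2 ∈ s),
          prod_congr rfl fun e he => edgeFactor_eq_one (mem_filter.mp he).2 y, prod_const_one,
          mul_one, prod_const, filter_filter, filter_filter]

theorem lintegral_edgeProduct_insert_update_le [IsProbabilityMeasure μ] (hp : 0 < p)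
    (hF : Measurable (uncurry F)) {E : Finset (ι × ι)} (hE : ∀ e ∈ E, e.1 ≠ e.2) {v : ι}
    (hdeg : (#{e ∈ E | e.1 = v ∨ e.2 = v} : ℝ) ≤ p) {s : Finset ι} (hv : v ∉ s)
    (y : ι → α) :
    ∫⁻ t, edgeProduct μ F p E (insert v s) (update y v t) ∂μ ≤
      edgeProduct μ F p E s y *
        kernelLpNorm μ F p ^ #{e ∈ E | (e.1 = v ∨ e.2 = v) ∧ ¬(e.1 ∈ s ∨ e.2 ∈ s)} := by
  have hmeas : Measurable fun t =>
      ∏ e ∈ E with e.1 = v ∨ e.2 = v, edgeFactor μ F p (insert v s) e (update y v t) :=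
    Finset.measurable_prod _ fun e _ => (measurable_edgeFactor hF _ e).comp (measurable_update y)
  simp_rw [edgeProduct_insert_update y]
  rw [lintegral_const_mul _ hmeas]
  calc _ ≤ (∏ e ∈ E with ¬(e.1 = v ∨ e.2 = v), edgeFactor μ F p s e y) *
          ((∏ e ∈ E with e.1 = v ∨ e.2 = v, edgeFactor μ F p s e y) *
            kernelLpNorm μ F p ^ #{e ∈ E | (e.1 = v ∨ e.2 = v) ∧ ¬(e.1 ∈ s ∨ e.2 ∈ s)}) := by
        gcongr
        exact lintegral_prod_incident_edgeFactor_le hp hF hE hdeg hv y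
    _ = _ := by
        rw [← mul_assoc, mul_comm (∏ e ∈ E with ¬_, _), prod_filter_mul_prod_filter_not,
          edgeProduct]

theorem lmarginal_edgeProduct_le [IsProbabilityMeasure μ] (hp : 0 < p)
    (hF : Measurable (uncurry F)) {E : Finset (ι × ι)} (hE : ∀ e ∈ E, e.1 ≠ e.2)
    (hdeg : ∀ v, (#{e ∈ E | e.1 = v ∨ e.2 = v} : ℝ) ≤ p) (s : Finset ι) (x : ι → α) :
    (∫⋯∫⁻_s, edgeProduct μ F p E s ∂fun _ => μ) x ≤
      kernelLpNorm μ F p ^ #{e ∈ E | e.1 ∈ s ∨ e.2 ∈ s} := by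
  induction s using Finset.induction_on generalizing x with
  | empty => simp [edgeProduct, edgeFactor]
  | @insert v s hv ih =>
    calc (∫⋯∫⁻_insert v s, edgeProduct μ F p E (insert v s) ∂fun _ => μ) x
        = (∫⋯∫⁻_s, (fun y => ∫⁻ t, edgeProduct μ F p E (insert v s) (update y v t) ∂μ)
            ∂fun _ => μ) x := by
          rw [lmarginal_insert' _ (measurable_edgeProduct hF E _) hv]
      _ ≤ (∫⋯∫⁻_s, (fun y => edgeProduct μ F p E s y * kernelLpNorm μ F p ^
            #{e ∈ E | (e.1 = v ∨ e.2 = v) ∧ ¬(e.1 ∈ s ∨ e.2 ∈ s)}) ∂fun _ => μ) x :=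
          lmarginal_mono (fun y => lintegral_edgeProduct_insert_update_le hp hF hE (hdeg v) hv y) x
      _ = (∫⋯∫⁻_s, edgeProduct μ F p E s ∂fun _ => μ) x * kernelLpNorm μ F p ^
            #{e ∈ E | (e.1 = v ∨ e.2 = v) ∧ ¬(e.1 ∈ s ∨ e.2 ∈ s)} :=
          lintegral_mul_const _ ((measurable_edgeProduct hF E s).comp measurable_updateFinset)
      _ ≤ kernelLpNorm μ F p ^ #{e ∈ E | e.1 ∈ insert v s ∨ e.2 ∈ insert v s} := by
          rw [card_filter_meets_insert, pow_add]
          gcongr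
          exact ih x

theorem lintegral_prod_edges_le_kernelLpNorm_pow [Fintype ι] [IsProbabilityMeasure μ]
    (hp : 0 < p) (hF : Measurable (uncurry F)) {E : Finset (ι × ι)} (hE : ∀ e ∈ E, e.1 ≠ e.2)
    (hdeg : ∀ v, (#{e ∈ E | e.1 = v ∨ e.2 = v} : ℝ) ≤ p) :
    ∫⁻ x, ∏ e ∈ E, F (x e.1) (x e.2) ∂Measure.pi (fun _ => μ) ≤ kernelLpNorm μ F p ^ #E := by
  obtain ⟨a⟩ := nonempty_of_isProbabilityMeasure μ
  have h := lmarginal_edgeProduct_le (μ := μ) hp hF hE hdeg (univ : Finset ι) (fun _ => a)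
  rw [← lintegral_eq_lmarginal_univ] at h
  simpa [edgeProduct, edgeFactor] using h

end Finner

namespace SimpleGraph

variable {V : Type*} [Fintype V] [LinearOrder V] (H : SimpleGraph V) [DecidableRel H.Adj]

theorem card_filter_lt_adj_eq_card_edgeFinset :
    #{e : V × V | e.1 < e.2 ∧ H.Adj e.1 e.2} = #H.edgeFinset := by
  refine card_bij (fun e _ => s(e.1, e.2)) (fun e he => ?_) (fun e he e' he' h => ?_) ?_
  · simpa using (mem_filter.mp he).2.2
  · simp only [mem_filter, mem_univ, true_and] at he he'
    rcases Sym2.eq_iff.mp h with ⟨h1, h2⟩ | ⟨h1, h2⟩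
    · exact Prod.ext h1 h2
    · exact absurd (he.1.trans (h2 ▸ h1 ▸ he'.1)) (lt_irrefl _)
  · refine Sym2.ind fun a b hab => ?_
    have hadj : H.Adj a b := by simpa using hab
    rcases hadj.ne.lt_or_gt with h | h
    · exact ⟨(a, b), by simp [h, hadj], rfl⟩
    · exact ⟨(b, a), by simp [h, hadj.symm], Sym2.eq_swap⟩

theorem card_filter_incident_le_degree (v : V) :
    #{e ∈ ({e : V × V | e.1 < e.2 ∧ H.Adj e.1 e.2} : Finset _) | e.1 = v ∨ e.2 = v} ≤
      H.degree v := by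
  rw [← card_neighborFinset_eq_degree]
  refine card_le_card_of_injOn (fun e => if e.1 = v then e.2 else e.1) ?_ ?_
  · rintro ⟨a, b⟩ he
    simp only [coe_filter, mem_filter, mem_univ, true_and, Set.mem_ofPred_eq] at he
    rcases he with ⟨⟨-, hab⟩, rfl | rfl⟩ <;> simp [hab, hab.symm, hab.ne]
  · rintro ⟨a, b⟩ he ⟨a', b'⟩ he' h
    simp only [coe_filter, mem_filter, mem_univ, true_and, Set.mem_ofPred_eq] at he he'
    grind

end SimpleGraph

theorem homDensity_le_Lnorm_pow_general
    {m : ℕ} (H : SimpleGraph (Fin m)) [DecidableRel H.Adj]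
    (d : ℕ) (hd : 1 ≤ d) (hdeg : ∀ v, H.degree v ≤ d)
    (f : I → I → ℝ)
    (hmeas : Measurable (fun z : I × I => f z.1 z.2))
    (hbdd : ∃ C : ℝ, ∀ x y, |f x y| ≤ C) :
    homDensity H f
      ≤ ((∫ z : I × I, |f z.1 z.2| ^ (d : ℝ)) ^ ((1 : ℝ) / d)) ^ H.edgeFinset.card := by
  obtain ⟨C, hC⟩ := hbdd
  set F : I → I → ℝ≥0∞ := fun a b => ‖f a b‖ₑ
  have hfin : kernelLpNorm volume F d ≠ ⊤ :=
    kernelLpNorm_ne_top d.cast_nonneg ofReal_ne_top fun a b => by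
      simpa [F, Real.enorm_eq_ofReal_abs] using ofReal_le_ofReal (hC a b)
  calc homDensity H f
      ≤ (∫⁻ x : Fin m → I, ∏ e ∈ ({e | e.1 < e.2 ∧ H.Adj e.1 e.2} : Finset (Fin m × Fin m)),
          F (x e.1) (x e.2)).toReal := by
        refine (Real.le_norm_self _).trans ((norm_integral_le_lintegral_norm _).trans_eq ?_)
        simp only [ofReal_norm, enorm_eq_nnnorm, nnnorm_prod, ofNNReal_finsetProd, F]
    _ ≤ (kernelLpNorm volume F d ^ #H.edgeFinset).toReal := by
        rw [← H.card_filter_lt_adj_eq_card_edgeFinset]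
        exact toReal_mono (pow_ne_top hfin) (lintegral_prod_edges_le_kernelLpNorm_pow
          (by exact_mod_cast hd) hmeas.enorm (fun e he => (mem_filter.mp he).2.2.ne)
          fun v => by exact_mod_cast (H.card_filter_incident_le_degree v).trans (hdeg v))
    _ = _ := by
        rw [toReal_pow, toReal_kernelLpNorm_enorm hmeas d.cast_nonneg, Measure.volume_eq_prod]

/-- If `H` has maximum degree at most `d` and `f` is a bounded symmetric measurable
kernel, then `t(H, f) ≤ ‖f‖_d ^ e(H)`. -/
theorem homDensity_le_Lnorm_pow
    {m : ℕ} (H : SimpleGraph (Fin m)) [DecidableRel H.Adj]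
    (d : ℕ) (hd : 1 ≤ d) (hdeg : ∀ v, H.degree v ≤ d)
    (f : I → I → ℝ)
    (hmeas : Measurable (fun z : I × I => f z.1 z.2))
    (hsymm : ∀ x y, f x y = f y x)
    (hbdd : ∃ C : ℝ, ∀ x y, |f x y| ≤ C) :
    homDensity H f
      ≤ ((∫ z : I × I, |f z.1 z.2| ^ (d : ℝ)) ^ ((1 : ℝ) / d)) ^ H.edgeFinset.card :=
  homDensity_le_Lnorm_pow_general H d hd hdeg f hmeas hbdd
end

section
/- Let G be a simple d-regular bipartite graph and H any graph possibly with loops. Then hom(G,H) ≤ hom(K_{d,d}, H)^{|V(G)|/(2d)}, where hom(G,H) is the number of graph homomorphisms from G to H and K_{d,d} is the complete bipartite graph with parts of size d. -/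
/-!
Colour one side `B` of a bipartition `V = A ⊔ B` of `G` by `ψ : B → W`; the vertices of `A` can
then be coloured independently, `a` among the `c(ψ|N(a))` common `R`-neighbours of the colours of
its neighbourhood, so `hom(G, H) = ∑_ψ ∏_a c(ψ|N(a))`. Every `b ∈ B` lies in exactly `d` of the
sets `N(a)`, so Finner's form of Hölder's inequality bounds the average of this product over `ψ`
by `∏_a ‖c(ψ|N(a))‖_d`, and each `d`-th moment equals `hom(K_{d,d}, H) / |W|^d`. Since
`|A| = |B|`, this is the claimed bound. Finner's inequality follows by resampling one coordinate
at a time and applying Hölder's inequality, with at most `d` factors, in that coordinate.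
-/

open Finset MeasureTheory
open scoped NNReal ENNReal BigOperators

/-- The number of homomorphisms from a simple graph `G` to a (possibly looped)
graph given by a symmetric relation `R` on a vertex type `W`. -/
noncomputable def homCount {V W : Type*} (G : SimpleGraph V) (R : W → W → Prop) : ℕ :=
  Nat.card {φ : V → W // ∀ u v, G.Adj u v → R (φ u) (φ v)}

section Expectation

variable {W : Type*} [Fintype W] [Nonempty W]

lemma coe_expect_eq_lintegral [MeasurableSpace W] [MeasurableSingletonClass W] (f : W → ℝ≥0) :
    ((𝔼 w, f w : ℝ≥0) : ℝ≥0∞) = ∫⁻ w, f w ∂((Fintype.card W : ℝ≥0∞)⁻¹ • Measure.count) := by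
  rw [lintegral_smul_measure, lintegral_count, tsum_fintype, expect_eq_sum_div_card, card_univ,
    ENNReal.coe_div (by simp), ENNReal.ofNNReal_finsetSum, ENNReal.div_eq_inv_mul]
  rfl

theorem expect_prod_pow_le_prod_expect_pow {A : Type*} (s : Finset A) {d : ℕ} (hd : d ≠ 0)
    (hs : #s ≤ d) (g : A → W → ℝ≥0) :
    (𝔼 w, ∏ a ∈ s, g a w) ^ d ≤ ∏ a ∈ s, 𝔼 w, g a w ^ d := by
  let _ : MeasurableSpace W := ⊤
  have hholder := ENNReal.lintegral_mul_prod_norm_pow_le s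
    (μ := (Fintype.card W : ℝ≥0∞)⁻¹ • Measure.count) (g := fun _ => ((1 : ℝ≥0) : ℝ≥0∞))
    (f := fun a w => ((g a w ^ d : ℝ≥0) : ℝ≥0∞)) Measurable.of_discrete.aemeasurable
    (fun _ _ => Measurable.of_discrete.aemeasurable) (1 - #s / d) (p := fun _ => (d : ℝ)⁻¹)
    (by simp [div_eq_mul_inv])
    (by rw [sub_nonneg, div_le_one (by positivity)]; exact_mod_cast hs)
    (fun _ _ => by positivity)
  have hintegrand (w : W) : ((1 : ℝ≥0) : ℝ≥0∞) ^ (1 - (#s / d : ℝ)) *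
      ∏ a ∈ s, ((g a w ^ d : ℝ≥0) : ℝ≥0∞) ^ (d⁻¹ : ℝ) = ((∏ a ∈ s, g a w : ℝ≥0) : ℝ≥0∞) := by
    simp [ENNReal.pow_rpow_inv_natCast hd]
  simp_rw [hintegrand, ← coe_expect_eq_lintegral, Fintype.expect_const, ENNReal.coe_one,
    ENNReal.one_rpow, one_mul, ← ENNReal.coe_rpow_of_nonneg _ (inv_nonneg.2 (Nat.cast_nonneg d)),
    ← ENNReal.ofNNReal_finsetProd, ENNReal.coe_le_coe] at hholder
  calc (𝔼 w, ∏ a ∈ s, g a w) ^ d ≤ (∏ a ∈ s, (𝔼 w, g a w ^ d) ^ (d⁻¹ : ℝ)) ^ d := by gcongr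
    _ = ∏ a ∈ s, 𝔼 w, g a w ^ d := by simp_rw [← prod_pow, NNReal.rpow_inv_natCast_pow _ hd]

lemma expect_comp_subtypeRestrict {ι M : Type*} [Fintype ι] [DecidableEq ι] [AddCommMonoid M]
    [Module ℚ≥0 M] (q : ι → Prop) [DecidablePred q] (F : ({i // q i} → W) → M) :
    𝔼 ψ : ι → W, F (Subtype.restrict q ψ) = 𝔼 y, F y :=
  calc 𝔼 ψ : ι → W, F (Subtype.restrict q ψ)
      = 𝔼 p : ({i // q i} → W) × ({i // ¬ q i} → W), F p.1 :=
        Fintype.expect_equiv (Equiv.piEquivPiSubtypeProd q fun _ => W) _ _ fun _ => rfl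
    _ = 𝔼 y, F y := by
        rw [← univ_product_univ, expect_product' univ univ fun y (_ : {i // ¬ q i} → W) => F y]
        simp

end Expectation

section Finner

variable {ι W : Type*} [DecidableEq ι]

lemma DependsOn.apply_update_of_notMem {β : Type*} {F : (ι → W) → β} {s : Set ι} {b : ι}
    (hF : DependsOn F s) (hb : b ∉ s) (ψ : ι → W) (w : W) :
    F (Function.update ψ b w) = F ψ :=
  hF fun _ hi => Function.update_of_ne (ne_of_mem_of_not_mem hi hb) _ _

variable [Fintype W]

lemma expect_expect_update [Fintype ι] [Nonempty W] {M : Type*} [AddCommMonoid M]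
    [Module ℚ≥0 M] (b : ι) (F : (ι → W) → M) :
    𝔼 ψ, 𝔼 w, F (Function.update ψ b w) = 𝔼 ψ, F ψ := by
  have hswap : Function.Involutive fun p : (ι → W) × W => (Function.update p.1 b p.2, p.1 b) := by
    intro p
    simp
  calc 𝔼 ψ, 𝔼 w, F (Function.update ψ b w)
      = 𝔼 p : (ι → W) × W, F (Function.update p.1 b p.2) := (expect_product' _ _ _).symm
    _ = 𝔼 p : (ι → W) × W, F p.1 := Fintype.expect_equiv hswap.toPerm _ _ fun _ => rfl
    _ = 𝔼 ψ, F ψ := by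
        rw [← univ_product_univ, expect_product' univ univ fun ψ (_ : W) => F ψ]
        simp

noncomputable def lpNormAlong (d : ℕ) (b : ι) (F : (ι → W) → ℝ≥0) (ψ : ι → W) : ℝ≥0 :=
  (𝔼 w, F (Function.update ψ b w) ^ d) ^ (d⁻¹ : ℝ)

variable {d : ℕ} {b : ι} {F : (ι → W) → ℝ≥0}

lemma lpNormAlong_pow (hd : d ≠ 0) (ψ : ι → W) :
    lpNormAlong d b F ψ ^ d = 𝔼 w, F (Function.update ψ b w) ^ d :=
  NNReal.rpow_inv_natCast_pow _ hd

lemma expect_lpNormAlong_pow [Fintype ι] [Nonempty W] (hd : d ≠ 0) :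
    𝔼 ψ, lpNormAlong d b F ψ ^ d = 𝔼 ψ, F ψ ^ d := by
  simp only [lpNormAlong_pow hd]
  exact expect_expect_update b fun ψ => F ψ ^ d

lemma lpNormAlong_eq_self [Nonempty W] {s : Set ι} (hd : d ≠ 0) (hF : DependsOn F s)
    (hb : b ∉ s) (ψ : ι → W) : lpNormAlong d b F ψ = F ψ := by
  simp [lpNormAlong, hF.apply_update_of_notMem hb, NNReal.pow_rpow_inv_natCast _ hd]

lemma DependsOn.lpNormAlong {s : Set ι} (hF : DependsOn F s) :
    DependsOn (lpNormAlong d b F) (s \ {b}) := by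
  intro ψ ψ' h
  have hupd (w : W) : F (Function.update ψ b w) = F (Function.update ψ' b w) := by
    refine hF fun i hi => ?_
    by_cases hib : i = b
    · simp [hib]
    · simp [Function.update_of_ne hib, h i ⟨hi, hib⟩]
  simp only [_root_.lpNormAlong, hupd]

lemma expect_prod_update_le_prod_lpNormAlong {A : Type*} [Fintype A] [Nonempty W] (hd : d ≠ 0)
    {N : A → Finset ι} (hb : #{a | b ∈ N a} ≤ d) {f : A → (ι → W) → ℝ≥0}
    (hf : ∀ a, DependsOn (f a) (N a)) (ψ : ι → W) :
    𝔼 w, ∏ a, f a (Function.update ψ b w) ≤ ∏ a, lpNormAlong d b (f a) ψ := by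
  have hconst (w : W) : ∏ a with b ∉ N a, f a (Function.update ψ b w) =
      ∏ a with b ∉ N a, lpNormAlong d b (f a) ψ :=
    prod_congr rfl fun a ha => by
      have hba : b ∉ (N a : Set ι) := by simpa using ha
      rw [(hf a).apply_update_of_notMem hba, lpNormAlong_eq_self hd (hf a) hba]
  have hholder : 𝔼 w, ∏ a with b ∈ N a, f a (Function.update ψ b w) ≤
      ∏ a with b ∈ N a, lpNormAlong d b (f a) ψ := by
    rw [← pow_le_pow_iff_left₀ zero_le zero_le hd, ← prod_pow]
    simp_rw [lpNormAlong_pow hd]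
    exact expect_prod_pow_le_prod_expect_pow _ hd hb _
  calc 𝔼 w, ∏ a, f a (Function.update ψ b w)
      = (𝔼 w, ∏ a with b ∈ N a, f a (Function.update ψ b w)) *
          ∏ a with b ∉ N a, lpNormAlong d b (f a) ψ := by
        rw [expect_mul]
        exact expect_congr rfl fun w _ => by rw [← hconst w, prod_filter_mul_prod_filter_not]
    _ ≤ (∏ a with b ∈ N a, lpNormAlong d b (f a) ψ) *
          ∏ a with b ∉ N a, lpNormAlong d b (f a) ψ := by gcongr
    _ = ∏ a, lpNormAlong d b (f a) ψ := prod_filter_mul_prod_filter_not _ _ _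

theorem expect_prod_pow_le_prod_expect_pow_of_dependsOn [Fintype ι] [Nonempty W] {A : Type*}
    [Fintype A] (hd : d ≠ 0) (N : A → Finset ι) (hN : ∀ b, #{a | b ∈ N a} ≤ d)
    (f : A → (ι → W) → ℝ≥0) (hf : ∀ a, DependsOn (f a) (N a)) :
    (𝔼 ψ, ∏ a, f a ψ) ^ d ≤ ∏ a, 𝔼 ψ, f a ψ ^ d := by
  suffices ∀ T : Finset ι, ∀ (N : A → Finset ι) (f : A → (ι → W) → ℝ≥0), (∀ a, N a ⊆ T) →
      (∀ b, #{a | b ∈ N a} ≤ d) → (∀ a, DependsOn (f a) (N a)) →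
      (𝔼 ψ, ∏ a, f a ψ) ^ d ≤ ∏ a, 𝔼 ψ, f a ψ ^ d from
    this univ N f (fun _ => subset_univ _) hN hf
  intro T
  induction T using Finset.induction_on with
  | empty =>
    intro N f hNT _ hf
    have hconst (a : A) (ψ : ι → W) : f a ψ = f a fun _ => Classical.arbitrary W :=
      (hf a).mono (by simp [subset_empty.mp (hNT a)]) |>.empty _ _
    simp [hconst, prod_pow]
  | insert b T hbT ih =>
    intro N f hNT hN hf
    calc (𝔼 ψ, ∏ a, f a ψ) ^ d = (𝔼 ψ, 𝔼 w, ∏ a, f a (Function.update ψ b w)) ^ d := by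
          rw [expect_expect_update b fun ψ => ∏ a, f a ψ]
      _ ≤ (𝔼 ψ, ∏ a, lpNormAlong d b (f a) ψ) ^ d := by
          gcongr with ψ
          exact expect_prod_update_le_prod_lpNormAlong hd (hN b) hf ψ
      _ ≤ ∏ a, 𝔼 ψ, lpNormAlong d b (f a) ψ ^ d := by
          refine ih (fun a => (N a).erase b) _ (fun a => ?_) (fun b' => ?_) fun a => ?_
          · simpa [erase_insert hbT] using erase_subset_erase b (hNT a)
          · exact (card_le_card <| monotone_filter_right _ fun a _ => mem_of_mem_erase).trans
              (hN b')
          · simpa using (hf a).lpNormAlong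
      _ = ∏ a, 𝔼 ψ, f a ψ ^ d := by simp_rw [expect_lpNormAlong_pow hd]

end Finner

section Counting

variable {W : Type*} (R : W → W → Prop)

noncomputable def commonNeighborCount {κ : Type*} (y : κ → W) : ℕ :=
  Nat.card {x : W // ∀ j, R x (y j)}

lemma commonNeighborCount_comp_equiv {κ κ' : Type*} (e : κ' ≃ κ) (y : κ → W) :
    commonNeighborCount R (y ∘ e) = commonNeighborCount R y :=
  Nat.card_congr <| Equiv.subtypeEquivRight fun x => e.forall_congr_right (q := fun j => R x (y j))

variable [Fintype W]

lemma card_bipartiteHom_eq_sum_prod {α β : Type*} [Fintype α] [Fintype β] [DecidableEq β]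
    (r : α → β → Prop) :
    Nat.card {q : (α → W) × (β → W) // ∀ a b, r a b → R (q.1 a) (q.2 b)} =
      ∑ ψ : β → W, ∏ a, commonNeighborCount R (Subtype.restrict (r a) ψ) := by
  classical
  let e : {q : (α → W) × (β → W) // ∀ a b, r a b → R (q.1 a) (q.2 b)} ≃
      Σ ψ : β → W, ∀ a, {x : W // ∀ b : {b // r a b}, R x (ψ b)} :=
    ((Equiv.prodComm _ _).subtypeEquiv fun _ => Iff.rfl).trans <|
      (Equiv.subtypeProdEquivSigmaSubtype fun (ψ : β → W) (φ : α → W) =>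
        ∀ a b, r a b → R (φ a) (ψ b)).trans <|
      Equiv.sigmaCongrRight fun ψ : β → W =>
        (Equiv.subtypeEquivRight fun φ => by simp).trans Equiv.subtypePiEquivPi
  rw [Nat.card_congr e, Nat.card_sigma]
  simp_rw [Nat.card_pi]
  rfl

variable [Std.Symm R]

lemma homCount_completeBipartiteGraph {α β : Type*} [Fintype α] [Fintype β] [DecidableEq β] :
    homCount (completeBipartiteGraph α β) R =
      ∑ y : β → W, commonNeighborCount R y ^ Fintype.card α := by
  let e : {φ : α ⊕ β → W // ∀ u v, (completeBipartiteGraph α β).Adj u v → R (φ u) (φ v)} ≃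
      {q : (α → W) × (β → W) // ∀ a b, True → R (q.1 a) (q.2 b)} :=
    (Equiv.sumArrowEquivProdArrow α β W).subtypeEquiv fun φ => by
      refine ⟨fun h a b _ => h (.inl a) (.inr b) (by simp), fun h u v huv => ?_⟩
      rcases u with a | b <;> rcases v with a' | b' <;> simp at huv
      · exact h a b' trivial
      · exact symm_of R (h a' b trivial)
  rw [homCount, Nat.card_congr e, card_bipartiteHom_eq_sum_prod]
  refine sum_congr rfl fun y _ => ?_
  rw [prod_const, card_univ]
  exact congrArg (· ^ _) <|
    commonNeighborCount_comp_equiv R (Equiv.subtypeUnivEquiv fun _ => trivial) y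

lemma homCount_eq_sum_prod_of_isBipartiteWith {V : Type*} [Fintype V] [DecidableEq V]
    {G : SimpleGraph V} {s : Set V} [DecidablePred (· ∈ s)] (hs : G.IsBipartiteWith s sᶜ) :
    homCount G R = ∑ ψ : ↥sᶜ → W, ∏ a : s,
      commonNeighborCount R (Subtype.restrict (fun b : ↥sᶜ => G.Adj a b) ψ) := by
  let e : {φ : V → W // ∀ u v, G.Adj u v → R (φ u) (φ v)} ≃
      {q : (s → W) × (↥sᶜ → W) // ∀ (a : s) (b : ↥sᶜ), G.Adj a b → R (q.1 a) (q.2 b)} :=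
    (Equiv.piEquivPiSubtypeProd (· ∈ s) fun _ => W).subtypeEquiv fun φ => by
      refine ⟨fun h a b hab => h a b hab, fun h u v huv => ?_⟩
      rcases hs.mem_of_adj huv with ⟨hu, hv⟩ | ⟨hu, hv⟩
      · exact h ⟨u, hu⟩ ⟨v, hv⟩ huv
      · exact symm_of R (h ⟨v, hv⟩ ⟨u, hu⟩ huv.symm)
  rw [homCount, Nat.card_congr e, card_bipartiteHom_eq_sum_prod]

lemma homCount_eq_mul_expect_prod_of_isBipartiteWith [Nonempty W] {V : Type*} [Fintype V]
    [DecidableEq V] {G : SimpleGraph V} {s : Set V} [DecidablePred (· ∈ s)]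
    (hs : G.IsBipartiteWith s sᶜ) :
    (homCount G R : ℝ≥0) = (Fintype.card W : ℝ≥0) ^ Fintype.card ↥sᶜ * 𝔼 ψ : ↥sᶜ → W, ∏ a : s,
      (commonNeighborCount R (Subtype.restrict (fun b : ↥sᶜ => G.Adj a b) ψ) : ℝ≥0) := by
  rw [homCount_eq_sum_prod_of_isBipartiteWith R hs, expect_eq_sum_div_card, card_univ,
    Fintype.card_fun]
  push_cast
  rw [mul_div_cancel₀ _ (by positivity)]

lemma expect_commonNeighborCount_restrict_pow [Nonempty W] {ι : Type*} [Fintype ι]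
    [DecidableEq ι] (q : ι → Prop) [DecidablePred q] {d : ℕ}
    (hq : Fintype.card {i // q i} = d) :
    𝔼 ψ : ι → W, (commonNeighborCount R (Subtype.restrict q ψ) : ℝ≥0) ^ d =
      homCount (completeBipartiteGraph (Fin d) (Fin d)) R / (Fintype.card W : ℝ≥0) ^ d := by
  let e : (Fin d → W) ≃ ({i // q i} → W) :=
    (Fintype.equivFinOfCardEq hq).symm.arrowCongr (.refl W)
  rw [expect_comp_subtypeRestrict q fun y => (commonNeighborCount R y : ℝ≥0) ^ d,
    ← Fintype.expect_equiv e (fun y => (commonNeighborCount R y : ℝ≥0) ^ d) _ fun y =>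
      congrArg (fun k : ℕ => (k : ℝ≥0) ^ d) (commonNeighborCount_comp_equiv R _ y).symm,
    homCount_completeBipartiteGraph, expect_eq_sum_div_card, card_univ, Fintype.card_fun]
  push_cast [Fintype.card_fin]
  rfl

end Counting

namespace SimpleGraph

variable {V : Type*} {G : SimpleGraph V}

lemma IsBipartite.exists_isBipartiteWith_compl (h : G.IsBipartite) :
    ∃ s : Set V, G.IsBipartiteWith s sᶜ := by
  obtain ⟨c⟩ := h
  refine ⟨{v | c v = 0}, ⟨disjoint_compl_right, fun v w hvw => ?_⟩⟩
  have := c.valid hvw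
  simp only [Set.mem_ofPred_eq, Set.mem_compl_iff]
  omega

variable [Fintype V] [DecidableRel G.Adj]

lemma IsRegularOfDegree.card_eq_of_isBipartiteWith {d : ℕ} (hreg : G.IsRegularOfDegree d)
    (hd : d ≠ 0) {s t : Set V} [Fintype s] [Fintype t] (h : G.IsBipartiteWith s t) :
    Fintype.card s = Fintype.card t := by
  have := isBipartiteWith_sum_degrees_eq (s := s.toFinset) (t := t.toFinset) (by simpa using h)
  simp only [hreg.degree_eq, sum_const, smul_eq_mul, Set.toFinset_card] at this
  exact Nat.eq_of_mul_eq_mul_right (Nat.pos_of_ne_zero hd) this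

lemma card_filter_adj_subtype (v : V) {t : Set V} [DecidablePred (· ∈ t)]
    (ht : ∀ u, G.Adj v u → u ∈ t) :
    #{u : t | G.Adj v u} = G.degree v := by
  rw [← card_neighborSet_eq_degree, ← Fintype.card_subtype]
  exact Fintype.card_congr <| (Equiv.subtypeSubtypeEquivSubtypeInter (· ∈ t) (G.Adj v)).trans <|
    Equiv.subtypeEquivRight fun u => ⟨And.right, fun h => ⟨ht u h, h⟩⟩

theorem homCount_pow_le_of_isBipartiteWith [DecidableEq V] {W : Type*} [Fintype W] [Nonempty W]
    {d : ℕ} (hd : d ≠ 0) (hreg : G.IsRegularOfDegree d) {s : Set V} [DecidablePred (· ∈ s)]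
    (hs : G.IsBipartiteWith s sᶜ) (R : W → W → Prop) [Std.Symm R] :
    homCount G R ^ d ≤ homCount (completeBipartiteGraph (Fin d) (Fin d)) R ^ Fintype.card s := by
  set m := Fintype.card s
  set K := homCount (completeBipartiteGraph (Fin d) (Fin d)) R
  let N : s → Finset ↥sᶜ := fun a => {b | G.Adj a b}
  let f : s → (↥sᶜ → W) → ℝ≥0 := fun a ψ =>
    commonNeighborCount R (Subtype.restrict (fun b : ↥sᶜ => G.Adj a b) ψ)
  have hW : (Fintype.card W : ℝ≥0) ≠ 0 := by positivity
  have hhom : (homCount G R : ℝ≥0) = (Fintype.card W : ℝ≥0) ^ m * 𝔼 ψ, ∏ a, f a ψ := by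
    rw [homCount_eq_mul_expect_prod_of_isBipartiteWith R hs,
      ← hreg.card_eq_of_isBipartiteWith hd hs]
  have hmoment (a : s) : 𝔼 ψ, f a ψ ^ d = K / (Fintype.card W : ℝ≥0) ^ d := by
    refine expect_commonNeighborCount_restrict_pow R _ ?_
    rw [Fintype.card_subtype, card_filter_adj_subtype a.1 fun u hu => hs.mem_of_mem_adj a.2 hu,
      hreg.degree_eq]
  have hcover (b : ↥sᶜ) : #{a | b ∈ N a} ≤ d := by
    have hN : #{a | b ∈ N a} = #{a : s | G.Adj b a} :=
      congrArg card <| filter_congr fun a _ => by simp [N, G.adj_comm]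
    rw [hN, card_filter_adj_subtype b.1 fun u hu => hs.symm.mem_of_mem_adj b.2 hu,
      hreg.degree_eq]
  have hdep (a : s) : DependsOn (f a) (N a) := fun ψ ψ' h =>
    congrArg (fun y => (commonNeighborCount R y : ℝ≥0)) <| funext fun b => h b (by simp [N])
  suffices (homCount G R : ℝ≥0) ^ d ≤ (K : ℝ≥0) ^ m by exact_mod_cast this
  calc (homCount G R : ℝ≥0) ^ d
      = (Fintype.card W : ℝ≥0) ^ (m * d) * (𝔼 ψ, ∏ a, f a ψ) ^ d := by
        rw [hhom, mul_pow, pow_mul]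
    _ ≤ (Fintype.card W : ℝ≥0) ^ (m * d) * ∏ a, 𝔼 ψ, f a ψ ^ d := by
        gcongr
        exact expect_prod_pow_le_prod_expect_pow_of_dependsOn hd N hcover f hdep
    _ = K ^ m := by
        simp_rw [hmoment]
        rw [prod_const, card_univ, div_pow, ← pow_mul, mul_comm d m, ← mul_div_assoc,
          mul_div_cancel_left₀ _ (pow_ne_zero _ hW)]

end SimpleGraph

lemma Real.le_rpow_div_of_pow_le {x y : ℝ} (hx : 0 ≤ x) (hy : 0 ≤ y) {m d : ℕ} (hd : d ≠ 0)
    (h : x ^ d ≤ y ^ m) : x ≤ y ^ ((m : ℝ) / d) :=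
  calc x = (x ^ d) ^ (d⁻¹ : ℝ) := (Real.pow_rpow_inv_natCast hx hd).symm
    _ ≤ (y ^ m) ^ (d⁻¹ : ℝ) := by gcongr
    _ = y ^ ((m : ℝ) / d) := by rw [← Real.rpow_natCast, ← Real.rpow_mul hy, div_eq_mul_inv]

/-- **Kahn–Galvin–Tetali inequality**: for a simple `d`-regular bipartite graph `G`
and any graph `H` (possibly with loops), `hom(G,H) ≤ hom(K_{d,d},H)^{|V(G)|/(2d)}`. -/
theorem hom_le_hom_Kdd
    {V W : Type*} [Fintype V] [Fintype W]
    (G : SimpleGraph V) [DecidableRel G.Adj]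
    (d : ℕ) (hd : 1 ≤ d)
    (hreg : G.IsRegularOfDegree d)
    (hbip : G.Colorable 2)
    (R : W → W → Prop) (hR : Symmetric R) :
    (homCount G R : ℝ)
      ≤ (homCount (completeBipartiteGraph (Fin d) (Fin d)) R : ℝ)
          ^ ((Fintype.card V : ℝ) / (2 * d)) := by
  classical
  have : Std.Symm R := ⟨hR⟩
  rcases isEmpty_or_nonempty V with hV | hV
  · have : homCount G R ≤ 1 := Finite.card_le_one_iff_subsingleton.mpr inferInstance
    simpa [Fintype.card_eq_zero] using this
  rcases isEmpty_or_nonempty W with hW | hW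
  · simp only [homCount, Nat.card_of_isEmpty, CharP.cast_eq_zero]
    positivity
  obtain ⟨s, hs⟩ := SimpleGraph.IsBipartite.exists_isBipartiteWith_compl hbip
  have hd0 : d ≠ 0 := Nat.one_le_iff_ne_zero.mp hd
  have hcard : Fintype.card V = 2 * Fintype.card s := by
    have := hreg.card_eq_of_isBipartiteWith hd0 hs
    rw [Fintype.card_compl_set] at this
    have := set_fintype_card_le_univ s
    omega
  rw [hcard, Nat.cast_mul, Nat.cast_two, mul_div_mul_left _ _ two_ne_zero]
  exact Real.le_rpow_div_of_pow_le (by positivity) (by positivity) hd0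
    (by exact_mod_cast SimpleGraph.homCount_pow_le_of_isBipartiteWith hd0 hreg hs R)
end

section
/- For every symmetric measurable f : [0,1]² → [−1,1], the operator norm and cut norm satisfy ‖f‖_op⁴ ≤ 4‖f‖_□, where ‖f‖_□ = sup_{S,T ⊆ [0,1]} |∫_{S×T} f(x,y) dx dy| is the cut norm and ‖f‖_op is the operator norm of the integral operator T_f on L²([0,1]). -/
open MeasureTheory unitInterval

/-- The operator norm of the Hilbert–Schmidt integral operator
`(T_f u)(x) = ∫ f(x,y) u(y) dy` on `L²([0,1])`. -/
noncomputable def opNorm (f : I → I → ℝ) : ℝ :=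
  sSup { c : ℝ | ∃ u : I → ℝ, MemLp u 2 ∧ (∫ y : I, (u y) ^ 2) ≤ 1 ∧
    c = Real.sqrt (∫ x : I, (∫ y : I, f x y * u y) ^ 2) }

/-- The cut norm `‖f‖_□ = sup_{S,T ⊆ [0,1]} |∫_{S×T} f|`. -/
noncomputable def cutNorm (f : I → I → ℝ) : ℝ :=
  sSup { c : ℝ | ∃ S T : Set I, MeasurableSet S ∧ MeasurableSet T ∧
    c = |∫ z : I × I, Set.indicator (S ×ˢ T) (fun z : I × I => f z.1 z.2) z| }

/-!
Write `T` for the integral operator and `⟨·, ·⟩` for the `L²` pairing. For `‖u‖₂ ≤ 1` put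
`v = T u`; then `|v| ≤ ‖u‖₁ ≤ 1` and `|T v| ≤ 1`. By symmetry
`‖v‖₂² = ⟨v, T u⟩ = ⟨u, T v⟩ ≤ ‖T v‖₂`, so `‖v‖₂⁴ ≤ ⟨T v, T v⟩`.
For `|w| ≤ 1` one has `|∫ w g| ≤ ∫ |g| = ∫_{g ≥ 0} g - ∫_{g < 0} g`, so `⟨w, T v⟩` is at most
twice a supremum of `|⟨1_S, T v⟩| = |⟨v, T 1_S⟩|`; repeating this in `v` bounds it by `4 ‖f‖_□`.
-/

lemma sSup_pow_le_of_forall_pow_le {S : Set ℝ} {a : ℝ} {n : ℕ} (hn : n ≠ 0) (ha : 0 ≤ a)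
    (hS : ∀ r ∈ S, 0 ≤ r ∧ r ^ n ≤ a) : sSup S ^ n ≤ a := by
  have hroot : 0 ≤ a ^ (n⁻¹ : ℝ) := by positivity
  have hle : sSup S ≤ a ^ (n⁻¹ : ℝ) := Real.sSup_le (fun r hr =>
    (pow_le_pow_iff_left₀ (hS r hr).1 hroot hn).1 <| by
      rw [Real.rpow_inv_natCast_pow ha hn]; exact (hS r hr).2) hroot
  calc sSup S ^ n ≤ (a ^ (n⁻¹ : ℝ)) ^ n :=
        pow_le_pow_left₀ (Real.sSup_nonneg fun r hr => (hS r hr).1) hle n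
    _ = a := Real.rpow_inv_natCast_pow ha hn

section

variable {α : Type*} [MeasurableSpace α] {μ : Measure α}

lemma sq_integral_mul_le_integral_sq_mul_integral_sq {u w : α → ℝ} (hu : MemLp u 2 μ)
    (hw : MemLp w 2 μ) :
    (∫ x, u x * w x ∂μ) ^ 2 ≤ (∫ x, u x ^ 2 ∂μ) * ∫ x, w x ^ 2 ∂μ := by
  have inner_toLp : ∀ {g h : α → ℝ} (hg : MemLp g 2 μ) (hh : MemLp h 2 μ),
      inner ℝ (hg.toLp g) (hh.toLp h) = ∫ x, g x * h x ∂μ := by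
    intro g h hg hh
    rw [L2.inner_def]
    refine integral_congr_ae ?_
    filter_upwards [hg.coeFn_toLp, hh.coeFn_toLp] with x hgx hhx
    rw [hgx, hhx, Real.inner_apply]
  have := real_inner_mul_inner_self_le (hu.toLp u) (hw.toLp w)
  simpa only [inner_toLp, sq] using this

lemma abs_integral_mul_le_integral_abs {w g : α → ℝ} (hw : ∀ x, |w x| ≤ 1)
    (hg : Integrable g μ) : |∫ x, w x * g x ∂μ| ≤ ∫ x, |g x| ∂μ :=
  abs_integral_le_integral_abs.trans <| integral_mono_of_nonneg (.of_forall fun _ => abs_nonneg _)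
    hg.abs (.of_forall fun x => by
      simp only [abs_mul]; exact mul_le_of_le_one_left (abs_nonneg _) (hw x))

lemma integral_abs_le_two_mul_of_forall_abs_setIntegral_le {g : α → ℝ} {c : ℝ}
    (hgm : Measurable g) (hg : Integrable g μ)
    (hc : ∀ s, MeasurableSet s → |∫ x in s, g x ∂μ| ≤ c) : ∫ x, |g x| ∂μ ≤ 2 * c := by
  set s := {x | 0 ≤ g x}
  have hs : MeasurableSet s := measurableSet_le measurable_const hgm
  have hpos : ∫ x in s, |g x| ∂μ = ∫ x in s, g x ∂μ :=
    setIntegral_congr_fun hs fun x hx => abs_of_nonneg hx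
  have hneg : ∫ x in sᶜ, |g x| ∂μ = -∫ x in sᶜ, g x ∂μ := by
    rw [← integral_neg]
    exact setIntegral_congr_fun hs.compl fun x hx => abs_of_neg (not_le.1 hx)
  rw [← integral_add_compl hs hg.abs, hpos, hneg]
  linarith [le_abs_self (∫ x in s, g x ∂μ), neg_le_abs (∫ x in sᶜ, g x ∂μ), hc s hs,
    hc sᶜ hs.compl]

variable {f : α → α → ℝ} {u v w : α → ℝ}

noncomputable def integralOperator (μ : Measure α) (f : α → α → ℝ) (v : α → ℝ) (x : α) : ℝ :=
  ∫ y, f x y * v y ∂μ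

lemma measurable_integralOperator [SFinite μ] (hf : Measurable fun z : α × α => f z.1 z.2)
    (hv : AEStronglyMeasurable v μ) : Measurable (integralOperator μ f v) := by
  have h : integralOperator μ f v = integralOperator μ f (hv.mk v) :=
    funext fun x => integral_congr_ae (hv.ae_eq_mk.mono fun y hy => by simp only [hy])
  rw [h]
  exact ((hf.mul (hv.stronglyMeasurable_mk.measurable.comp measurable_snd)).stronglyMeasurable
    |>.integral_prod_right').measurable

lemma abs_integralOperator_le (hf1 : ∀ x y, |f x y| ≤ 1) (hv : Integrable v μ) (x : α) :
    |integralOperator μ f v x| ≤ ∫ y, |v y| ∂μ :=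
  abs_integral_mul_le_integral_abs (hf1 x) hv

lemma integrable_mul_comp_snd [IsFiniteMeasure μ] {ν : Measure α} [SFinite ν]
    (hf : Measurable fun z : α × α => f z.1 z.2) (hf1 : ∀ x y, |f x y| ≤ 1)
    (hv : Integrable v ν) : Integrable (fun z : α × α => f z.1 z.2 * v z.2) (μ.prod ν) :=
  (hv.comp_snd μ).abs.mono' (hf.aestronglyMeasurable.mul (hv.comp_snd μ).1)
    (.of_forall fun z => by
      rw [Real.norm_eq_abs, abs_mul]; exact mul_le_of_le_one_left (abs_nonneg _) (hf1 _ _))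

lemma integral_integral_mul_swap [SFinite μ] {ν : Measure α} [SFinite ν]
    (hint : Integrable (fun z : α × α => f z.1 z.2 * v z.2) (μ.prod ν)) :
    ∫ x, ∫ y, f x y * v y ∂ν ∂μ = ∫ y, v y * ∫ x, f x y ∂μ ∂ν := by
  rw [integral_integral_swap hint]
  simp only [integral_mul_const, mul_comm]

section Symmetric

variable [IsFiniteMeasure μ] (hf : Measurable fun z : α × α => f z.1 z.2)
  (hf1 : ∀ x y, |f x y| ≤ 1) (hsymm : ∀ x y, f x y = f y x)
include hf hf1 hsymm

lemma setIntegral_integralOperator (hv : Integrable v μ) (s : Set α) :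
    ∫ x in s, integralOperator μ f v x ∂μ = ∫ y, v y * ∫ x in s, f y x ∂μ ∂μ := by
  simp only [integralOperator]
  rw [integral_integral_mul_swap (integrable_mul_comp_snd hf hf1 hv)]
  simp only [hsymm _ (_ : α)]

lemma integral_mul_integralOperator_comm (hwm : Measurable w) (hw : ∀ x, |w x| ≤ 1)
    (hv : Integrable v μ) :
    ∫ x, w x * integralOperator μ f v x ∂μ = ∫ y, v y * integralOperator μ f w y ∂μ := by
  have hk : Measurable fun z : α × α => w z.1 * f z.1 z.2 := (hwm.comp measurable_fst).mul hf
  have hk1 : ∀ x y, |w x * f x y| ≤ 1 := fun x y => by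
    rw [abs_mul]; exact mul_le_one₀ (hw x) (abs_nonneg _) (hf1 x y)
  calc ∫ x, w x * integralOperator μ f v x ∂μ = ∫ x, ∫ y, w x * f x y * v y ∂μ ∂μ := by
        simp only [integralOperator, ← integral_const_mul, mul_assoc]
    _ = ∫ y, v y * ∫ x, w x * f x y ∂μ ∂μ :=
        integral_integral_mul_swap (integrable_mul_comp_snd hk hk1 hv)
    _ = ∫ y, v y * integralOperator μ f w y ∂μ := by
        simp only [integralOperator, hsymm _ (_ : α), mul_comm (w _)]

theorem abs_integral_mul_integralOperator_le {c : ℝ}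
    (hc : ∀ s t, MeasurableSet s → MeasurableSet t → |∫ x in s, ∫ y in t, f x y ∂μ ∂μ| ≤ c)
    (hw : ∀ x, |w x| ≤ 1) (hvm : Measurable v) (hv : ∀ x, |v x| ≤ 1) :
    |∫ x, w x * integralOperator μ f v x ∂μ| ≤ 4 * c := by
  have hv_int : Integrable v μ := .of_bound hvm.aestronglyMeasurable 1 (.of_forall hv)
  have hTv_int : Integrable (integralOperator μ f v) μ :=
    .of_bound (measurable_integralOperator hf hv_int.1).aestronglyMeasurable _
      (.of_forall (abs_integralOperator_le hf1 hv_int))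
  have hTv_abs : ∫ x, |integralOperator μ f v x| ∂μ ≤ 2 * (2 * c) := by
    refine integral_abs_le_two_mul_of_forall_abs_setIntegral_le
      (measurable_integralOperator hf hv_int.1) hTv_int fun s hs => ?_
    set g := fun y => ∫ x in s, f y x ∂μ
    have hgm : Measurable g :=
      (hf.stronglyMeasurable.integral_prod_right' (ν := μ.restrict s)).measurable
    have hg_int : Integrable g μ := .of_bound hgm.aestronglyMeasurable _
      (.of_forall fun y => norm_integral_le_of_norm_le_const (.of_forall fun x => hf1 y x))
    rw [setIntegral_integralOperator hf hf1 hsymm hv_int]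
    exact (abs_integral_mul_le_integral_abs hv hg_int).trans
      (integral_abs_le_two_mul_of_forall_abs_setIntegral_le hgm hg_int fun t ht => hc t s ht hs)
  linarith [abs_integral_mul_le_integral_abs (μ := μ) hw hTv_int]

theorem sq_integral_sq_integralOperator_le [IsProbabilityMeasure μ] {c : ℝ}
    (hc : ∀ s t, MeasurableSet s → MeasurableSet t → |∫ x in s, ∫ y in t, f x y ∂μ ∂μ| ≤ c)
    (hu : MemLp u 2 μ) (hu1 : ∫ x, u x ^ 2 ∂μ ≤ 1) :
    (∫ x, integralOperator μ f u x ^ 2 ∂μ) ^ 2 ≤ 4 * c := by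
  set v := integralOperator μ f u
  have hu_int : Integrable u μ := hu.integrable one_le_two
  have hu_abs : ∫ x, |u x| ∂μ ≤ 1 := by
    have := sq_integral_mul_le_integral_sq_mul_integral_sq hu.abs (memLp_const (1 : ℝ))
    simp only [Pi.abs_apply, mul_one, sq_abs, one_pow, integral_const, probReal_univ,
      one_smul] at this
    have h0 : 0 ≤ ∫ x, |u x| ∂μ := integral_nonneg fun x => abs_nonneg _
    nlinarith
  have hvm : Measurable v := measurable_integralOperator hf hu.1
  have hv : ∀ x, |v x| ≤ 1 := fun x => (abs_integralOperator_le hf1 hu_int x).trans hu_abs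
  have hv_int : Integrable v μ := .of_bound hvm.aestronglyMeasurable 1 (.of_forall hv)
  have hv_abs : ∫ x, |v x| ∂μ ≤ 1 := by
    simpa using integral_mono hv_int.abs (integrable_const 1) hv
  have hTvm : Measurable (integralOperator μ f v) := measurable_integralOperator hf hv_int.1
  have hTv : ∀ x, |integralOperator μ f v x| ≤ 1 :=
    fun x => (abs_integralOperator_le hf1 hv_int x).trans hv_abs
  have hTv_L2 : MemLp (integralOperator μ f v) 2 μ :=
    .of_bound hTvm.aestronglyMeasurable 1 (.of_forall hTv)
  calc (∫ x, v x ^ 2 ∂μ) ^ 2 = (∫ x, u x * integralOperator μ f v x ∂μ) ^ 2 := by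
        rw [← integral_mul_integralOperator_comm hf hf1 hsymm hvm hv hu_int]
        simp only [v, sq]
    _ ≤ (∫ x, u x ^ 2 ∂μ) * ∫ x, integralOperator μ f v x ^ 2 ∂μ :=
        sq_integral_mul_le_integral_sq_mul_integral_sq hu hTv_L2
    _ ≤ ∫ x, integralOperator μ f v x * integralOperator μ f v x ∂μ := by
        simp only [← sq]
        exact mul_le_of_le_one_left (integral_nonneg fun x => sq_nonneg _) hu1
    _ ≤ 4 * c := (le_abs_self _).trans
        (abs_integral_mul_integralOperator_le hf hf1 hsymm hc hTv hvm hv)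

end Symmetric

end

lemma abs_setIntegral_setIntegral_le_cutNorm {f : I → I → ℝ}
    (hf : Measurable fun z : I × I => f z.1 z.2) (hf1 : ∀ x y, |f x y| ≤ 1) {s t : Set I}
    (hs : MeasurableSet s) (ht : MeasurableSet t) :
    |∫ x in s, ∫ y in t, f x y| ≤ cutNorm f := by
  have hF : ∀ (S T : Set I) z, ‖(S ×ˢ T).indicator (fun z : I × I => f z.1 z.2) z‖ ≤ 1 :=
    fun S T z => (norm_indicator_le_norm_self _ z).trans (hf1 z.1 z.2)
  have hbdd : BddAbove {c : ℝ | ∃ S T : Set I, MeasurableSet S ∧ MeasurableSet T ∧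
      c = |∫ z : I × I, (S ×ˢ T).indicator (fun z : I × I => f z.1 z.2) z|} := by
    refine ⟨1, ?_⟩
    rintro _ ⟨S, T, -, -, rfl⟩
    simpa using norm_integral_le_of_norm_le_const (μ := volume) (.of_forall (hF S T))
  refine le_csSup hbdd ⟨s, t, hs, ht, ?_⟩
  have hint : Integrable (fun z : I × I => f z.1 z.2) (volume.prod volume) :=
    .of_bound hf.aestronglyMeasurable 1 (.of_forall fun z => hf1 z.1 z.2)
  rw [integral_indicator (hs.prod ht), Measure.volume_eq_prod,
    setIntegral_prod _ hint.integrableOn]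

/-- For a symmetric measurable `f : [0,1]² → [−1,1]`, `‖f‖_op⁴ ≤ 4 ‖f‖_□`. -/
theorem opNorm_pow_four_le_cutNorm
    (f : I → I → ℝ)
    (hrange : ∀ x y, f x y ∈ Set.Icc (-1 : ℝ) 1)
    (hsymm : ∀ x y, f x y = f y x)
    (hmeas : Measurable (fun z : I × I => f z.1 z.2)) :
    (opNorm f) ^ 4 ≤ 4 * cutNorm f := by
  have hf1 : ∀ x y, |f x y| ≤ 1 := fun x y => abs_le.2 (hrange x y)
  have hc := fun s t (hs : MeasurableSet s) (ht : MeasurableSet t) =>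
    abs_setIntegral_setIntegral_le_cutNorm hmeas hf1 hs ht
  have hc0 : 0 ≤ cutNorm f := by simpa using hc ∅ ∅ .empty .empty
  refine sSup_pow_le_of_forall_pow_le four_ne_zero (by positivity) ?_
  rintro _ ⟨u, hu, hu1, rfl⟩
  refine ⟨Real.sqrt_nonneg _, ?_⟩
  rw [show 4 = 2 * 2 from rfl, pow_mul, Real.sq_sqrt (integral_nonneg fun x => sq_nonneg _)]
  exact sq_integral_sq_integralOperator_le hmeas hf1 hsymm hc hu hu1
end

section
/- For any symmetric measurable f : [0,1]² → [0,1] and any u ∈ L²([0,1]) with ‖u‖₂ = 1, one has ‖T_f u‖₂⁴ ≤ ∫_{[0,1]⁴} f(x,y) f(x,y') f(x',y) f(x',y') dx dx' dy dy', i.e., the fourth power of the operator norm of T_f is at most the homomorphism density t(C₄, f) of the 4-cycle. -/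
/-!
With `g(y, y') = ∫ f(x, y) f(x, y') dx` (`codegree f`) the kernel of `T_fᵀ T_f`, Fubini gives
`‖T_f u‖₂² = ⟨g, u ⊗ u⟩`. Cauchy–Schwarz in `L²([0,1]²)` and `‖u ⊗ u‖₂ = ‖u‖₂² = 1` then bound
`‖T_f u‖₂⁴` by `‖g‖₂²`, and expanding `‖g‖₂²` by Fubini once more yields exactly `t(C₄, f)`.
-/

open MeasureTheory unitInterval

theorem sq_integral_mul_le_integral_sq_mul_integral_sq_s7 {α : Type*} [MeasurableSpace α]
    {μ : Measure α} {g h : α → ℝ} (hg : MemLp g 2 μ) (hh : MemLp h 2 μ) :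
    (∫ a, g a * h a ∂μ) ^ 2 ≤ (∫ a, g a ^ 2 ∂μ) * ∫ a, h a ^ 2 ∂μ := by
  have inner_toLp : ∀ {a b : α → ℝ} (ha : MemLp a 2 μ) (hb : MemLp b 2 μ),
      inner ℝ (ha.toLp a) (hb.toLp b) = ∫ x, a x * b x ∂μ := fun ha hb => by
    rw [L2.inner_def]
    refine integral_congr_ae ?_
    filter_upwards [ha.coeFn_toLp, hb.coeFn_toLp] with x hax hbx
    simp [hax, hbx, mul_comm]
  simpa only [inner_toLp, ← sq] using real_inner_mul_inner_self_le (hg.toLp g) (hh.toLp h)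

theorem MeasureTheory.MemLp.mul_prod {α β : Type*} [MeasurableSpace α] [MeasurableSpace β]
    {μ : Measure α} {ν : Measure β} [SFinite ν] {u : α → ℝ} {v : β → ℝ}
    (hu : MemLp u 2 μ) (hv : MemLp v 2 ν) :
    MemLp (fun p : α × β => u p.1 * v p.2) 2 (μ.prod ν) :=
  (memLp_two_iff_integrable_sq (f := fun p : α × β => u p.1 * v p.2)
    (hu.1.comp_fst.mul hv.1.comp_snd)).mpr <| by
      simpa only [mul_pow] using hu.integrable_sq.mul_prod hv.integrable_sq

theorem Measurable.comp₂_of_uncurry {α β γ δ : Type*} [MeasurableSpace α] [MeasurableSpace β]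
    [MeasurableSpace γ] [MeasurableSpace δ] {f : α → β → γ}
    (hf : Measurable fun z : α × β => f z.1 z.2) {a : δ → α} {b : δ → β}
    (ha : Measurable a) (hb : Measurable b) : Measurable fun w => f (a w) (b w) :=
  hf.comp (ha.prodMk hb)

noncomputable def codegree {α β : Type*} [MeasurableSpace α] (f : α → β → ℝ) (μ : Measure α)
    (p : β × β) : ℝ :=
  ∫ x, f x p.1 * f x p.2 ∂μ

section Codegree

variable {α β : Type*} [MeasurableSpace α] [MeasurableSpace β] {μ : Measure α} {ν : Measure β}
  [IsFiniteMeasure μ] [IsFiniteMeasure ν] {f : α → β → ℝ} {C : ℝ}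

theorem memLp_codegree (hf : Measurable fun z : α × β => f z.1 z.2) (hfC : ∀ x y, ‖f x y‖ ≤ C) :
    MemLp (codegree f μ) 2 (ν.prod ν) := by
  have hm : StronglyMeasurable fun z : α × (β × β) => f z.1 z.2.1 * f z.1 z.2.2 :=
    ((hf.comp₂_of_uncurry measurable_fst measurable_snd.fst).mul
      (hf.comp₂_of_uncurry measurable_fst measurable_snd.snd)).stronglyMeasurable
  exact .of_bound hm.integral_prod_left'.aestronglyMeasurable (C * C * μ.real Set.univ)
    (.of_forall fun p => norm_integral_le_of_norm_le_const
      (.of_forall fun x => norm_mul_le_of_le (hfC _ _) (hfC _ _)))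

theorem integral_sq_integral_mul_eq_integral_codegree_mul
    (hf : Measurable fun z : α × β => f z.1 z.2) (hfC : ∀ x y, ‖f x y‖ ≤ C)
    {u : β → ℝ} (hu : Integrable u ν) :
    ∫ x, (∫ y, f x y * u y ∂ν) ^ 2 ∂μ
      = ∫ p, codegree f μ p * (u p.1 * u p.2) ∂(ν.prod ν) := by
  have hint : Integrable
      (fun z : α × (β × β) => (f z.1 z.2.1 * f z.1 z.2.2) * (u z.2.1 * u z.2.2))
      (μ.prod (ν.prod ν)) :=
    ((hu.mul_prod hu).comp_snd μ).bdd_mul (c := C * C)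
      ((hf.comp₂_of_uncurry measurable_fst measurable_snd.fst).mul
        (hf.comp₂_of_uncurry measurable_fst measurable_snd.snd)).aestronglyMeasurable
      (.of_forall fun z => norm_mul_le_of_le (hfC _ _) (hfC _ _))
  calc ∫ x, (∫ y, f x y * u y ∂ν) ^ 2 ∂μ
      = ∫ x, ∫ p, (f x p.1 * f x p.2) * (u p.1 * u p.2) ∂(ν.prod ν) ∂μ := by
        refine integral_congr_ae (.of_forall fun x => ?_)
        simp only [sq, ← integral_prod_mul]
        congr 1 with p
        ring
    _ = ∫ p, ∫ x, (f x p.1 * f x p.2) * (u p.1 * u p.2) ∂μ ∂(ν.prod ν) :=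
        integral_integral_swap hint
    _ = ∫ p, codegree f μ p * (u p.1 * u p.2) ∂(ν.prod ν) := by
        simp only [integral_mul_const, codegree]

theorem integrable_fourCycle {γ : Type*} [MeasurableSpace γ] {ρ : Measure γ} [IsFiniteMeasure ρ]
    (hf : Measurable fun z : α × β => f z.1 z.2) (hfC : ∀ x y, ‖f x y‖ ≤ C)
    {a d : γ → α} {b c : γ → β} (ha : Measurable a) (hb : Measurable b) (hc : Measurable c)
    (hd : Measurable d) :
    Integrable (fun w => f (a w) (b w) * f (a w) (c w) * (f (d w) (b w) * f (d w) (c w))) ρ :=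
  .of_bound (((hf.comp₂_of_uncurry ha hb).mul (hf.comp₂_of_uncurry ha hc)).mul
      ((hf.comp₂_of_uncurry hd hb).mul (hf.comp₂_of_uncurry hd hc))).aestronglyMeasurable _
    (.of_forall fun _ => norm_mul_le_of_le (norm_mul_le_of_le (hfC _ _) (hfC _ _))
      (norm_mul_le_of_le (hfC _ _) (hfC _ _)))

theorem integral_codegree_sq (hf : Measurable fun z : α × β => f z.1 z.2)
    (hfC : ∀ x y, ‖f x y‖ ≤ C) :
    ∫ p, codegree f μ p ^ 2 ∂(ν.prod ν)
      = ∫ w, f w.1.1 w.2.1 * f w.1.1 w.2.2 * f w.1.2 w.2.1 * f w.1.2 w.2.2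
          ∂((μ.prod μ).prod (ν.prod ν)) := by
  calc ∫ p, codegree f μ p ^ 2 ∂(ν.prod ν)
      = ∫ p, ∫ q, (f q.1 p.1 * f q.1 p.2) * (f q.2 p.1 * f q.2 p.2) ∂(μ.prod μ) ∂(ν.prod ν) := by
        simp only [codegree, sq, ← integral_prod_mul]
    _ = ∫ q, ∫ p, (f q.1 p.1 * f q.1 p.2) * (f q.2 p.1 * f q.2 p.2) ∂(ν.prod ν) ∂(μ.prod μ) :=
        integral_integral_swap (integrable_fourCycle hf hfC measurable_snd.fst measurable_fst.fst
          measurable_fst.snd measurable_snd.snd)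
    _ = _ := by
        refine .trans ?_ (integral_prod _ ?_).symm
        · congr 1 with q
          congr 1 with p
          ring
        · simpa only [mul_assoc] using integrable_fourCycle hf hfC measurable_fst.fst
            measurable_snd.fst measurable_snd.snd measurable_fst.snd

end Codegree

theorem Tf_norm_four_le_C4_density_general
    (f : I → I → ℝ)
    (hrange : ∀ x y, f x y ∈ Set.Icc (0 : ℝ) 1)
    (hmeas : Measurable (fun z : I × I => f z.1 z.2))
    (u : I → ℝ) (hu : MemLp u 2) (hunorm : (∫ y : I, (u y) ^ 2) = 1) :
    (∫ x : I, (∫ y : I, f x y * u y) ^ 2) ^ 2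
      ≤ ∫ w : (I × I) × I × I,
          f w.1.1 w.2.1 * f w.1.1 w.2.2 * f w.1.2 w.2.1 * f w.1.2 w.2.2 := by
  have hf1 : ∀ x y, ‖f x y‖ ≤ 1 := fun x y =>
    abs_le.mpr ⟨by linarith [(hrange x y).1], (hrange x y).2⟩
  have norm_u_tensor_u : ∫ p, (u p.1 * u p.2) ^ 2 ∂(volume.prod volume) = 1 := by
    simp only [mul_pow]
    rw [integral_prod_mul (fun y => u y ^ 2) (fun y => u y ^ 2), hunorm, mul_one]
  calc (∫ x : I, (∫ y : I, f x y * u y) ^ 2) ^ 2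
      = (∫ p, codegree f volume p * (u p.1 * u p.2) ∂(volume.prod volume)) ^ 2 := by
        rw [integral_sq_integral_mul_eq_integral_codegree_mul hmeas hf1 (hu.integrable one_le_two)]
    _ ≤ (∫ p, codegree f volume p ^ 2 ∂(volume.prod volume)) *
          ∫ p, (u p.1 * u p.2) ^ 2 ∂(volume.prod volume) :=
        sq_integral_mul_le_integral_sq_mul_integral_sq_s7 (memLp_codegree hmeas hf1) (hu.mul_prod hu)
    _ = _ := by rw [norm_u_tensor_u, mul_one, integral_codegree_sq hmeas hf1]; rfl

/-- For a graphon `f : [0,1]² → [0,1]` and `u ∈ L²([0,1])` with `‖u‖₂ = 1`,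
`‖T_f u‖₂⁴ ≤ t(C₄, f)`, the homomorphism density of the four-cycle. -/
theorem Tf_norm_four_le_C4_density
    (f : I → I → ℝ)
    (hrange : ∀ x y, f x y ∈ Set.Icc (0 : ℝ) 1)
    (hsymm : ∀ x y, f x y = f y x)
    (hmeas : Measurable (fun z : I × I => f z.1 z.2))
    (u : I → ℝ) (hu : MemLp u 2) (hunorm : (∫ y : I, (u y) ^ 2) = 1) :
    (∫ x : I, (∫ y : I, f x y * u y) ^ 2) ^ 2
      ≤ ∫ w : (I × I) × I × I,
          f w.1.1 w.2.1 * f w.1.1 w.2.2 * f w.1.2 w.2.1 * f w.1.2 w.2.2 :=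
  Tf_norm_four_le_C4_density_general f hrange hmeas u hu hunorm
end

section
/- Fix p ∈ (0,1) and d ≥ 1, and let h_p(x) = x log(x/p) + (1−x) log((1−x)/(1−p)) for x ∈ [0,1]. Suppose r ∈ (0,1) is such that (r^d, h_p(r)) lies on the convex minorant of the function x ↦ h_p(x^{1/d}) on [0,1], and moreover the convex minorant is not linear in any neighborhood of r^d. If f : [0,1]² → [0,1] is measurable with p < r and (∫ f^d)^{1/d} ≥ r, then ∫ h_p(f(x,y)) dx dy ≥ h_p(r), with equality if and only if f = r almost everywhere. -/
open MeasureTheory unitInterval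

/-- The binomial rate function `h_p(x) = x log(x/p) + (1−x) log((1−x)/(1−p))`. -/
noncomputable def hbin (p x : ℝ) : ℝ :=
  x * Real.log (x / p) + (1 - x) * Real.log ((1 - x) / (1 - p))

/-- The convex minorant on `[0,1]`: the pointwise supremum of all convex functions
lying below `ψ` on `[0,1]`. -/
noncomputable def convexMinorant (ψ : ℝ → ℝ) (x : ℝ) : ℝ :=
  sSup { y : ℝ | ∃ g : ℝ → ℝ, ConvexOn ℝ (Set.Icc 0 1) g ∧
    (∀ t ∈ Set.Icc (0 : ℝ) 1, g t ≤ ψ t) ∧ y = g x }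

/-!
Write `ψ x = hbin p (x ^ (1 / d))` and `φ` for its convex minorant, so that
`hbin p t = ψ (t ^ d) ≥ φ (t ^ d)`. As `φ` is convex and `r ^ d` is an interior point, `φ` has a
supporting line `L` at `r ^ d` through `(r ^ d, hbin p r)`; its slope `a` is positive because
`L (p ^ d) ≤ ψ (p ^ d) = 0 < hbin p r`. Hence
`∫ hbin p f ≥ ∫ L (f ^ d) = hbin p r + a (∫ f ^ d - r ^ d) ≥ hbin p r`.
In case of equality `∫ f ^ d = r ^ d` and `φ (f ^ d) = L (f ^ d)` a.e. A convex function that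
touches a line on both sides of `r ^ d` coincides with it in between, which the non-linearity of
`φ` near `r ^ d` excludes; so `f ^ d - r ^ d` has a constant sign and mean zero, hence vanishes a.e.
-/

open Set InformationTheory

section Hbin

variable {p : ℝ}

theorem hbin_eq_klFun (hp : p ∈ Ioo (0 : ℝ) 1) (x : ℝ) :
    hbin p x = p * klFun (x / p) + (1 - p) * klFun ((1 - x) / (1 - p)) := by
  have : 1 - p ≠ 0 := by linarith [hp.2]
  simp only [hbin, klFun]
  field_simp [hp.1.ne']
  ring

theorem continuous_hbin (hp : p ∈ Ioo (0 : ℝ) 1) : Continuous (hbin p) := by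
  simp_rw [funext (hbin_eq_klFun hp)]
  fun_prop

theorem hbin_nonneg (hp : p ∈ Ioo (0 : ℝ) 1) {x : ℝ} (hx : x ∈ Icc (0 : ℝ) 1) :
    0 ≤ hbin p x := by
  obtain ⟨hp0, hp1⟩ := hp
  rw [hbin_eq_klFun ⟨hp0, hp1⟩]
  have h₁ := klFun_nonneg (div_nonneg hx.1 hp0.le)
  have h₂ := klFun_nonneg (div_nonneg (sub_nonneg.2 hx.2) (sub_nonneg.2 hp1.le))
  have := sub_pos.2 hp1
  positivity

theorem hbin_pos (hp : p ∈ Ioo (0 : ℝ) 1) {x : ℝ} (hx : x ∈ Icc (0 : ℝ) 1) (hxp : x ≠ p) :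
    0 < hbin p x := by
  obtain ⟨hp0, hp1⟩ := hp
  rw [hbin_eq_klFun ⟨hp0, hp1⟩]
  have h₁ : 0 < klFun (x / p) :=
    (klFun_nonneg (div_nonneg hx.1 hp0.le)).lt_of_ne' fun h => hxp <| by
      rwa [klFun_eq_zero_iff (div_nonneg hx.1 hp0.le), div_eq_one_iff_eq hp0.ne'] at h
  have h₂ := klFun_nonneg (div_nonneg (sub_nonneg.2 hx.2) (sub_nonneg.2 hp1.le))
  have := sub_pos.2 hp1
  positivity

theorem hbin_self (p : ℝ) : hbin p p = 0 := by
  simp [hbin]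

end Hbin

section ConvexMinorant

variable {ψ : ℝ → ℝ}

theorem le_convexMinorant {g : ℝ → ℝ} (hg : ConvexOn ℝ (Icc 0 1) g)
    (hgψ : ∀ t ∈ Icc (0 : ℝ) 1, g t ≤ ψ t) {x : ℝ} (hx : x ∈ Icc (0 : ℝ) 1) :
    g x ≤ convexMinorant ψ x :=
  le_csSup ⟨ψ x, by rintro _ ⟨g, -, hgψ, rfl⟩; exact hgψ x hx⟩ ⟨g, hg, hgψ, rfl⟩

variable (hψ : BddBelow (ψ '' Icc 0 1))
include hψ

theorem convexMinorant_set_nonempty (x : ℝ) :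
    { y : ℝ | ∃ g : ℝ → ℝ, ConvexOn ℝ (Icc 0 1) g ∧
      (∀ t ∈ Icc (0 : ℝ) 1, g t ≤ ψ t) ∧ y = g x }.Nonempty := by
  obtain ⟨c, hc⟩ := hψ
  exact ⟨c, fun _ => c, convexOn_const c (convex_Icc 0 1),
    fun t ht => hc (mem_image_of_mem ψ ht), rfl⟩

theorem convexMinorant_le {x : ℝ} (hx : x ∈ Icc (0 : ℝ) 1) : convexMinorant ψ x ≤ ψ x :=
  csSup_le (convexMinorant_set_nonempty hψ x) <| by
    rintro _ ⟨g, -, hgψ, rfl⟩; exact hgψ x hx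

theorem convexOn_convexMinorant : ConvexOn ℝ (Icc 0 1) (convexMinorant ψ) := by
  refine ⟨convex_Icc 0 1, fun x hx y hy a b ha hb hab => ?_⟩
  refine csSup_le (convexMinorant_set_nonempty hψ _) ?_
  rintro _ ⟨g, hg, hgψ, rfl⟩
  calc g (a • x + b • y) ≤ a • g x + b • g y := hg.2 hx hy ha hb hab
    _ ≤ a • convexMinorant ψ x + b • convexMinorant ψ y := by
      gcongr
      exacts [le_convexMinorant hg hgψ hx, le_convexMinorant hg hgψ hy]

end ConvexMinorant

def IsAffineNear (φ : ℝ → ℝ) (S : Set ℝ) (x₀ : ℝ) : Prop :=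
  ∃ ε > 0, ∃ a b : ℝ, ∀ x ∈ Ioo (x₀ - ε) (x₀ + ε) ∩ S, φ x = a * x + b

namespace ConvexOn

variable {S : Set ℝ} {φ : ℝ → ℝ}

theorem rightDeriv_mul_sub_add_le (hφ : ConvexOn ℝ S φ) {x₀ x : ℝ} (hx₀ : x₀ ∈ interior S)
    (hx : x ∈ S) : derivWithin φ (Ioi x₀) x₀ * (x - x₀) + φ x₀ ≤ φ x := by
  rcases lt_trichotomy x x₀ with hlt | rfl | hgt
  · have h := (hφ.slope_le_leftDeriv_of_mem_interior hx hx₀ hlt).trans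
      (hφ.leftDeriv_le_rightDeriv_of_mem_interior hx₀)
    rw [slope_def_field, div_le_iff₀ (sub_pos.2 hlt)] at h
    linarith
  · simp
  · have h := hφ.rightDeriv_le_slope_of_mem_interior hx₀ hx hgt
    rw [slope_def_field, le_div_iff₀ (sub_pos.2 hgt)] at h
    linarith

theorem eq_of_le_of_eq_of_mem_Icc (hφ : ConvexOn ℝ S φ) {g : ℝ → ℝ} (hg : ConcaveOn ℝ S g)
    (hgφ : ∀ x ∈ S, g x ≤ φ x) {x₁ x₂ x : ℝ} (hx₁ : x₁ ∈ S) (hx₂ : x₂ ∈ S)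
    (h₁ : φ x₁ = g x₁) (h₂ : φ x₂ = g x₂) (hx : x ∈ Icc x₁ x₂) : φ x = g x := by
  have hxS : x ∈ S := hφ.1.ordConnected.out hx₁ hx₂ hx
  have := (hφ.sub hg).le_on_segment hx₁ hx₂ (segment_eq_Icc (hx.1.trans hx.2) ▸ hx)
  simp only [Pi.sub_apply, h₁, h₂, sub_self, max_self] at this
  linarith [hgφ x hxS]

theorem eq_affine_one_sided (hφ : ConvexOn ℝ S φ) {a c x₀ : ℝ}
    (hL : ∀ x ∈ S, a * (x - x₀) + c ≤ φ x) (hnot : ¬ IsAffineNear φ S x₀) :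
    (∀ x ∈ S, φ x = a * (x - x₀) + c → x₀ ≤ x) ∨
      (∀ x ∈ S, φ x = a * (x - x₀) + c → x ≤ x₀) := by
  by_contra! ⟨⟨x₁, hx₁, h₁, hx₁x₀⟩, ⟨x₂, hx₂, h₂, hx₀x₂⟩⟩
  have hconc : ConcaveOn ℝ S fun x => a * (x - x₀) + c := by
    refine ⟨hφ.1, fun x _ y _ s t _ _ hst => le_of_eq ?_⟩
    simp only [smul_eq_mul]
    linear_combination (c - a * x₀) * hst
  refine hnot ⟨min (x₀ - x₁) (x₂ - x₀), lt_min (sub_pos.2 hx₁x₀) (sub_pos.2 hx₀x₂),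
    a, c - a * x₀, fun x ⟨hx, _⟩ => ?_⟩
  rw [hφ.eq_of_le_of_eq_of_mem_Icc hconc hL hx₁ hx₂ h₁ h₂
    ⟨by linarith [hx.1, min_le_left (x₀ - x₁) (x₂ - x₀)],
      by linarith [hx.2, min_le_right (x₀ - x₁) (x₂ - x₀)]⟩]
  ring

end ConvexOn

section Integral

variable {Ω : Type*} [MeasurableSpace Ω] {μ : Measure Ω}

theorem integrable_comp_of_mem_isCompact [IsFiniteMeasure μ] {g : ℝ → ℝ} {X : Ω → ℝ}
    {K : Set ℝ} (hK : IsCompact K) (hg : Continuous g) (hX : Measurable X)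
    (hXK : ∀ ω, X ω ∈ K) : Integrable (fun ω => g (X ω)) μ := by
  obtain ⟨C, hC⟩ := hK.exists_bound_of_continuousOn hg.continuousOn
  exact Integrable.of_bound (hg.measurable.comp hX).aestronglyMeasurable C
    (ae_of_all _ fun ω => hC _ (hXK ω))

variable [IsProbabilityMeasure μ] {G Y : Ω → ℝ} {a c y₀ : ℝ}

theorem integral_mul_sub_add (hY : Integrable Y μ) :
    ∫ ω, a * (Y ω - y₀) + c ∂μ = a * (∫ ω, Y ω ∂μ - y₀) + c := by
  rw [integral_add (by fun_prop) (integrable_const c), integral_const_mul,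
    integral_sub hY (integrable_const y₀)]
  simp

theorem le_integral_of_affine_le (hG : Integrable G μ) (hY : Integrable Y μ) (ha : 0 ≤ a)
    (hle : ∀ ω, a * (Y ω - y₀) + c ≤ G ω) (hy₀ : y₀ ≤ ∫ ω, Y ω ∂μ) : c ≤ ∫ ω, G ω ∂μ := by
  have hLG := integral_mono (by fun_prop) hG hle
  rw [integral_mul_sub_add hY] at hLG
  nlinarith

theorem ae_eq_affine_of_integral_eq (hG : Integrable G μ) (hY : Integrable Y μ) (ha : 0 < a)
    (hle : ∀ ω, a * (Y ω - y₀) + c ≤ G ω) (hy₀ : y₀ ≤ ∫ ω, Y ω ∂μ) (heq : ∫ ω, G ω ∂μ = c) :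
    ∫ ω, Y ω ∂μ = y₀ ∧ ∀ᵐ ω ∂μ, G ω = a * (Y ω - y₀) + c := by
  have hL : Integrable (fun ω => a * (Y ω - y₀) + c) μ := by fun_prop
  have hLG := integral_mono hL hG hle
  rw [integral_mul_sub_add hY] at hLG
  have hmean : ∫ ω, Y ω ∂μ = y₀ := by nlinarith
  refine ⟨hmean, ?_⟩
  have := (integral_eq_iff_of_ae_le hL hG (ae_of_all _ hle)).1 (by
    rw [integral_mul_sub_add hY, hmean, heq]; ring)
  filter_upwards [this] with ω hω using hω.symm

theorem ae_eq_of_integral_eq_of_ae_one_sided (hY : Integrable Y μ)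
    (hside : (∀ᵐ ω ∂μ, y₀ ≤ Y ω) ∨ ∀ᵐ ω ∂μ, Y ω ≤ y₀) (hmean : ∫ ω, Y ω ∂μ = y₀) :
    ∀ᵐ ω ∂μ, Y ω = y₀ := by
  rcases hside with h | h
  · have := (integral_eq_iff_of_ae_le (integrable_const y₀) hY h).1 (by simp [hmean])
    filter_upwards [this] with ω hω using hω.symm
  · exact (integral_eq_iff_of_ae_le hY (integrable_const y₀) h).1 (by simp [hmean])

theorem ConvexOn.ae_eq_of_integral_eq {S : Set ℝ} {φ : ℝ → ℝ} (hφ : ConvexOn ℝ S φ)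
    (ha : 0 < a) (hL : ∀ x ∈ S, a * (x - y₀) + c ≤ φ x) (hnot : ¬ IsAffineNear φ S y₀)
    (hYS : ∀ ω, Y ω ∈ S) (hY : Integrable Y μ) (hG : Integrable G μ)
    (hφG : ∀ ω, φ (Y ω) ≤ G ω) (hy₀ : y₀ ≤ ∫ ω, Y ω ∂μ) (heq : ∫ ω, G ω ∂μ = c) :
    ∀ᵐ ω ∂μ, Y ω = y₀ := by
  obtain ⟨hmean, hGL⟩ := ae_eq_affine_of_integral_eq hG hY ha
    (fun ω => (hL _ (hYS ω)).trans (hφG ω)) hy₀ heq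
  have hcontact : ∀ᵐ ω ∂μ, φ (Y ω) = a * (Y ω - y₀) + c := hGL.mono fun ω h =>
    le_antisymm ((hφG ω).trans h.le) (hL _ (hYS ω))
  refine ae_eq_of_integral_eq_of_ae_one_sided hY ?_ hmean
  exact (hφ.eq_affine_one_sided hL hnot).imp
    (fun h => hcontact.mono fun ω hω => h _ (hYS ω) hω)
    (fun h => hcontact.mono fun ω hω => h _ (hYS ω) hω)

end Integral

section BinomialRate

variable {p : ℝ} {d : ℕ}

theorem hbin_pow_rpow_inv (hd : d ≠ 0) {t : ℝ} (ht : 0 ≤ t) :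
    hbin p ((t ^ d) ^ ((1 : ℝ) / d)) = hbin p t := by
  rw [one_div, Real.pow_rpow_inv_natCast ht hd]

theorem bddBelow_hbin_rpow (hp : p ∈ Ioo (0 : ℝ) 1) (d : ℕ) :
    BddBelow ((fun x => hbin p (x ^ ((1 : ℝ) / d))) '' Icc 0 1) := by
  refine ⟨0, ?_⟩
  rintro _ ⟨x, hx, rfl⟩
  exact hbin_nonneg hp ⟨Real.rpow_nonneg hx.1 _, Real.rpow_le_one hx.1 hx.2 (by positivity)⟩

theorem exists_pos_affine_le_convexMinorant (hp : p ∈ Ioo (0 : ℝ) 1) (hd : d ≠ 0) {r : ℝ}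
    (hr : r ∈ Ioo (0 : ℝ) 1) (hpr : p < r)
    (hmin : convexMinorant (fun x => hbin p (x ^ ((1 : ℝ) / d))) (r ^ d) = hbin p r) :
    ∃ a > 0, ∀ x ∈ Icc (0 : ℝ) 1,
      a * (x - r ^ d) + hbin p r ≤ convexMinorant (fun x => hbin p (x ^ ((1 : ℝ) / d))) x := by
  set ψ := fun x : ℝ => hbin p (x ^ ((1 : ℝ) / d))
  have hψ := bddBelow_hbin_rpow hp d
  have hrd : r ^ d ∈ interior (Icc (0 : ℝ) 1) := by
    rw [interior_Icc]
    exact ⟨pow_pos hr.1 d, pow_lt_one₀ hr.1.le hr.2 hd⟩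
  have hL := fun x (hx : x ∈ Icc (0 : ℝ) 1) =>
    hmin ▸ (convexOn_convexMinorant hψ).rightDeriv_mul_sub_add_le hrd hx
  refine ⟨_, ?_, hL⟩
  have hpd : p ^ d ∈ Icc (0 : ℝ) 1 := ⟨pow_nonneg hp.1.le d, pow_le_one₀ hp.1.le hp.2.le⟩
  have hψpd : ψ (p ^ d) = 0 := by simp only [ψ, hbin_pow_rpow_inv hd hp.1.le, hbin_self]
  have := (hL _ hpd).trans (convexMinorant_le hψ hpd)
  have hr_pos := hbin_pos hp ⟨hr.1.le, hr.2.le⟩ hpr.ne'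
  have hlt := pow_lt_pow_left₀ hpr hp.1.le hd
  nlinarith

end BinomialRate

/-- If `(r^d, h_p(r))` lies on the convex minorant of `x ↦ h_p(x^{1/d})`, the minorant
is not linear near `r^d`, and `f` is a `[0,1]`-valued kernel with `‖f‖_d ≥ r` where
`p < r`, then `∫ h_p(f) ≥ h_p(r)`, with equality iff `f = r` a.e. -/
theorem hbin_integral_ge_of_Ld_ge
    (p : ℝ) (hp : p ∈ Set.Ioo (0 : ℝ) 1)
    (d : ℕ) (hd : 1 ≤ d)
    (r : ℝ) (hr : r ∈ Set.Ioo (0 : ℝ) 1) (hpr : p < r)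
    (hmin : convexMinorant (fun x => hbin p (x ^ ((1 : ℝ) / d))) (r ^ d) = hbin p r)
    (hnotlin : ∀ ε > (0 : ℝ), ¬ ∃ a b : ℝ,
      ∀ x ∈ Set.Ioo (r ^ d - ε) (r ^ d + ε) ∩ Set.Icc (0 : ℝ) 1,
        convexMinorant (fun x => hbin p (x ^ ((1 : ℝ) / d))) x = a * x + b)
    (f : I → I → ℝ)
    (hrange : ∀ x y, f x y ∈ Set.Icc (0 : ℝ) 1)
    (hmeas : Measurable (fun z : I × I => f z.1 z.2))
    (hnorm : r ≤ (∫ z : I × I, (f z.1 z.2) ^ d) ^ ((1 : ℝ) / d)) :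
    hbin p r ≤ (∫ z : I × I, hbin p (f z.1 z.2)) ∧
      ((∫ z : I × I, hbin p (f z.1 z.2)) = hbin p r ↔
        ∀ᵐ z : I × I, f z.1 z.2 = r) := by
  have hd0 : d ≠ 0 := by omega
  have hψ := bddBelow_hbin_rpow hp d
  obtain ⟨a, ha, hL⟩ := exists_pos_affine_le_convexMinorant hp hd0 hr hpr hmin
  have hpow : ∀ z : I × I, f z.1 z.2 ^ d ∈ Icc (0 : ℝ) 1 := fun z =>
    ⟨pow_nonneg (hrange _ _).1 d, pow_le_one₀ (hrange _ _).1 (hrange _ _).2⟩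
  have hφG : ∀ z : I × I, convexMinorant (fun x => hbin p (x ^ ((1 : ℝ) / d))) (f z.1 z.2 ^ d) ≤
      hbin p (f z.1 z.2) := fun z =>
    (convexMinorant_le hψ (hpow z)).trans_eq (hbin_pow_rpow_inv hd0 (hrange _ _).1)
  have hY : Integrable fun z : I × I => f z.1 z.2 ^ d :=
    integrable_comp_of_mem_isCompact isCompact_Icc (continuous_pow d) hmeas fun z => hrange _ _
  have hG : Integrable fun z : I × I => hbin p (f z.1 z.2) :=
    integrable_comp_of_mem_isCompact isCompact_Icc (continuous_hbin hp) hmeas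
      fun z => hrange _ _
  have hmean : r ^ d ≤ ∫ z : I × I, f z.1 z.2 ^ d := by
    rwa [one_div, Real.le_rpow_inv_iff_of_pos hr.1.le (integral_nonneg fun z => (hpow z).1)
      (by positivity), Real.rpow_natCast] at hnorm
  refine ⟨le_integral_of_affine_le hG hY ha.le (fun z => (hL _ (hpow z)).trans (hφG z)) hmean,
    fun heq => ?_, fun hae => ?_⟩
  · filter_upwards [(convexOn_convexMinorant hψ).ae_eq_of_integral_eq ha hL
      (fun ⟨ε, hε, h⟩ => hnotlin ε hε h) hpow hY hG hφG hmean heq] with z hz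
    exact (pow_left_inj₀ (hrange _ _).1 hr.1.le hd0).1 hz
  · rw [integral_congr_ae (hae.mono fun z hz => congrArg (hbin p) hz)]
    simp
end

section
/- Fix γ > 1 and set p₀(γ) = (γ−1)/(γ−1 + e^{γ/(γ−1)}). If p ≥ p₀(γ), then the function x ↦ h_p(x^{1/γ}) is convex on (0,1), where h_p(x) = x log(x/p) + (1−x) log((1−x)/(1−p)). -/
open Real Set

noncomputable def hbinDeriv (p u : ℝ) : ℝ :=
  log (u / p) - log ((1 - u) / (1 - p))

section Derivatives

variable {p u : ℝ}

lemma hasDerivAt_hbin (hp₀ : p ≠ 0) (hp₁ : 1 - p ≠ 0) (hu₀ : u ≠ 0) (hu₁ : 1 - u ≠ 0) :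
    HasDerivAt (hbin p) (hbinDeriv p u) u := by
  have hl := ((hasDerivAt_id u).div_const p).log (div_ne_zero hu₀ hp₀)
  have hr := (((hasDerivAt_id u).const_sub 1).div_const (1 - p)).log (div_ne_zero hu₁ hp₁)
  refine (((hasDerivAt_id u).mul hl).add
    (((hasDerivAt_id u).const_sub 1).mul hr)).congr_deriv ?_
  simp only [hbinDeriv, id]
  field_simp
  ring

lemma hasDerivAt_hbinDeriv (hp₀ : p ≠ 0) (hp₁ : 1 - p ≠ 0) (hu₀ : u ≠ 0) (hu₁ : 1 - u ≠ 0) :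
    HasDerivAt (hbinDeriv p) (u⁻¹ + (1 - u)⁻¹) u := by
  have hl := ((hasDerivAt_id u).div_const p).log (div_ne_zero hu₀ hp₀)
  have hr := (((hasDerivAt_id u).const_sub 1).div_const (1 - p)).log (div_ne_zero hu₁ hp₁)
  refine (hl.sub hr).congr_deriv ?_
  simp only [id]
  field_simp
  ring

end Derivatives

lemma one_sub_div_le_of_div_add_le {a b p : ℝ} (ha : 0 < a) (hb : 0 ≤ b) (hp : 0 < p)
    (h : a / (a + b) ≤ p) : (1 - p) / p ≤ b / a := by
  rw [div_le_iff₀ (by positivity)] at h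
  rw [div_le_div_iff₀ hp ha]
  linarith

lemma mul_hbinDeriv_le {γ p u : ℝ} (hγ : 1 < γ) (hp : p ∈ Ioo (0 : ℝ) 1)
    (hp₀ : (γ - 1) / (γ - 1 + exp (γ / (γ - 1))) ≤ p) (hu : u ∈ Ioo (0 : ℝ) 1) :
    (γ - 1) * hbinDeriv p u ≤ (1 - u)⁻¹ := by
  obtain ⟨hp0, hp1⟩ := hp
  obtain ⟨hu0, hu1⟩ := hu
  have hγ1 : 0 < γ - 1 := by linarith
  have hu1' : 0 < 1 - u := by linarith
  have hp1' : 0 < 1 - p := by linarith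
  set c := γ / (γ - 1)
  set y := u / ((γ - 1) * (1 - u))
  have hy : 0 < y := by positivity
  have hodds : (1 - p) / p ≤ exp c / (γ - 1) :=
    one_sub_div_le_of_div_add_le hγ1 (exp_pos c).le hp0 hp₀
  calc (γ - 1) * hbinDeriv p u = (γ - 1) * log (u / (1 - u) * ((1 - p) / p)) := by
        rw [hbinDeriv, ← log_div (by positivity) (by positivity)]
        congr 2
        field_simp
    _ ≤ (γ - 1) * log (y * exp c) := by
        have hyc : y * exp c = u / (1 - u) * (exp c / (γ - 1)) := by
          simp only [y]; field_simp
        rw [hyc]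
        gcongr
    _ = (γ - 1) * (log y + c) := by rw [log_mul hy.ne' (exp_pos c).ne', log_exp]
    _ ≤ (γ - 1) * (y - 1 + c) := by gcongr; exact log_le_sub_one_of_pos hy
    _ = (1 - u)⁻¹ := by simp only [y, c]; field_simp; ring

lemma monotoneOn_rpow_mul_hbinDeriv {γ p : ℝ} (hγ : 1 < γ) (hp : p ∈ Ioo (0 : ℝ) 1)
    (hp₀ : (γ - 1) / (γ - 1 + exp (γ / (γ - 1))) ≤ p) :
    MonotoneOn (fun u => u ^ (1 - γ) * hbinDeriv p u) (Ioo 0 1) := by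
  have hderiv : ∀ u ∈ Ioo (0 : ℝ) 1, HasDerivAt (fun u => u ^ (1 - γ) * hbinDeriv p u)
      ((1 - γ) * u ^ (1 - γ - 1) * hbinDeriv p u + u ^ (1 - γ) * (u⁻¹ + (1 - u)⁻¹)) u :=
    fun u hu => (hasDerivAt_rpow_const (Or.inl hu.1.ne')).mul
      (hasDerivAt_hbinDeriv hp.1.ne' (sub_ne_zero.2 hp.2.ne') hu.1.ne' (sub_ne_zero.2 hu.2.ne'))
  refine monotoneOn_of_hasDerivWithinAt_nonneg (convex_Ioo 0 1) (f' := fun u =>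
      (1 - γ) * u ^ (1 - γ - 1) * hbinDeriv p u + u ^ (1 - γ) * (u⁻¹ + (1 - u)⁻¹))
    (HasDerivAt.continuousOn hderiv) (fun u hu => ?_) (fun u hu => ?_) <;>
    rw [interior_Ioo] at hu
  · exact (hderiv u hu).hasDerivWithinAt
  have hu0 := hu.1
  have hu1 : 0 < 1 - u := sub_pos.2 hu.2
  have hkey := mul_hbinDeriv_le hγ hp hp₀ hu
  have : (1 - γ) * u ^ (1 - γ - 1) * hbinDeriv p u + u ^ (1 - γ) * (u⁻¹ + (1 - u)⁻¹)
      = u ^ (1 - γ - 1) * ((1 - u)⁻¹ - (γ - 1) * hbinDeriv p u) := by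
    rw [rpow_sub_one hu0.ne']
    field_simp
    ring
  rw [this]
  exact mul_nonneg (by positivity) (sub_nonneg.2 hkey)

lemma hasDerivAt_hbin_rpow {γ p x : ℝ} (hγ : 0 < γ) (hp : p ∈ Ioo (0 : ℝ) 1)
    (hx : x ∈ Ioo (0 : ℝ) 1) :
    HasDerivAt (fun x => hbin p (x ^ (1 / γ)))
      ((x ^ (1 / γ)) ^ (1 - γ) * hbinDeriv p (x ^ (1 / γ)) / γ) x := by
  have hu0 : 0 < x ^ (1 / γ) := rpow_pos_of_pos hx.1 _
  have hu1 : x ^ (1 / γ) < 1 := rpow_lt_one hx.1.le hx.2 (by positivity)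
  have hh := hasDerivAt_hbin hp.1.ne' (sub_ne_zero.2 hp.2.ne') hu0.ne' (sub_ne_zero.2 hu1.ne')
  refine (hh.comp x (hasDerivAt_rpow_const (p := 1 / γ) (Or.inl hx.1.ne'))).congr_deriv ?_
  rw [← rpow_mul hx.1.le, show 1 / γ * (1 - γ) = 1 / γ - 1 by field_simp]
  ring

/-- For `γ > 1` and `p ≥ p₀(γ) = (γ−1)/(γ−1+e^{γ/(γ−1)})`, the function
`x ↦ h_p(x^{1/γ})` is convex on `(0,1)`. -/
theorem convexOn_hbin_rpow_of_p_ge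
    (γ : ℝ) (hγ : 1 < γ)
    (p : ℝ) (hp : p ∈ Set.Ioo (0 : ℝ) 1)
    (hp0 : (γ - 1) / (γ - 1 + Real.exp (γ / (γ - 1))) ≤ p) :
    ConvexOn ℝ (Set.Ioo (0 : ℝ) 1) (fun x => hbin p (x ^ (1 / γ))) := by
  have hγ0 : 0 < γ := by linarith
  have hderiv x (hx : x ∈ Ioo (0 : ℝ) 1) := hasDerivAt_hbin_rpow hγ0 hp hx
  have hmaps : MapsTo (fun x : ℝ => x ^ (1 / γ)) (Ioo 0 1) (Ioo 0 1) := fun x hx =>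
    ⟨rpow_pos_of_pos hx.1 _, rpow_lt_one hx.1.le hx.2 (by positivity)⟩
  have hmono : MonotoneOn (fun x : ℝ => x ^ (1 / γ)) (Ioo 0 1) := fun x hx y _ hxy =>
    rpow_le_rpow hx.1.le hxy (by positivity)
  have hφ := (monotoneOn_rpow_mul_hbinDeriv hγ hp hp0).comp hmono hmaps
  refine MonotoneOn.convexOn_of_deriv (convex_Ioo 0 1) (HasDerivAt.continuousOn hderiv) ?_ ?_ <;>
    rw [interior_Ioo]
  · exact fun x hx => (hderiv x hx).differentiableAt.differentiableWithinAt
  · refine MonotoneOn.congr (fun x hx y hy hxy => ?_) fun x hx => ((hderiv x hx).deriv).symm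
    exact div_le_div_of_nonneg_right (hφ hx hy hxy) hγ0.le
end

section
/- Fix γ > 1 and p ∈ (0,1) with p < p₀(γ) = (γ−1)/(γ−1 + e^{γ/(γ−1)}). Then the function φ(x) = h_p(x^{1/γ}) on (0,1) has exactly two inflection points, both lying to the right of x = p^γ; φ is convex, then concave, then convex. -/
/-!
With `y = x ^ (1/γ)`, the second derivative of `φ` at `x` is `x ^ (1/γ - 2) / γ² · g(y)`, where
`g(y) = 1/(1 - y) - (γ - 1)(logOdds y - logOdds p)`. As `g'(y) = (γy - (γ - 1)) / (y(1 - y)²)`,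
`g` decreases on `(0, c]` and increases on `[c, 1)` for `c = (γ - 1)/γ`. Moreover `g(p) > 0`,
`g → +∞` at `1`, and `p < p₀(γ)` is exactly the condition `g(c) < 0`. So `g` has one zero
`z₁ ∈ (p, c)` and one `z₂ ∈ (c, 1)`, and the inflection points are `z₁ ^ γ` and `z₂ ^ γ`.
-/

open Real Set Filter Topology

noncomputable def logOdds (x : ℝ) : ℝ := log x - log (1 - x)

lemma hasDerivAt_logOdds {x : ℝ} (hx₀ : x ≠ 0) (hx₁ : x ≠ 1) :
    HasDerivAt logOdds (x⁻¹ + (1 - x)⁻¹) x := by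
  have h := (hasDerivAt_log hx₀).sub ((hasDerivAt_log (sub_ne_zero.2 hx₁.symm)).comp x
    ((hasDerivAt_id x).const_sub 1))
  exact h.congr_deriv (by simp)

lemma hasDerivAt_hbin_s12 {p x : ℝ} (hp₀ : p ≠ 0) (hp₁ : p ≠ 1) (hx₀ : x ≠ 0) (hx₁ : x ≠ 1) :
    HasDerivAt (hbin p) (logOdds x - logOdds p) x := by
  have hp₁' : 1 - p ≠ 0 := sub_ne_zero.2 hp₁.symm
  have hx₁' : 1 - x ≠ 0 := sub_ne_zero.2 hx₁.symm
  have h := ((hasDerivAt_id x).mul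
    (((hasDerivAt_id x).div_const p).log (div_ne_zero hx₀ hp₀))).add
    (((hasDerivAt_id x).const_sub 1).mul
      ((((hasDerivAt_id x).const_sub 1).div_const (1 - p)).log (div_ne_zero hx₁' hp₁')))
  refine h.congr_deriv ?_
  simp only [logOdds, id, log_div hx₀ hp₀, log_div hx₁' hp₁']
  field_simp
  ring

lemma hasDerivAt_hbin_comp_rpow {p a x : ℝ} (hp₀ : p ≠ 0) (hp₁ : p ≠ 1) (hx : 0 < x)
    (hxa : x ^ a ≠ 1) :
    HasDerivAt (fun x => hbin p (x ^ a)) ((logOdds (x ^ a) - logOdds p) * (a * x ^ (a - 1))) x :=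
  (hasDerivAt_hbin_s12 hp₀ hp₁ (rpow_pos_of_pos hx a).ne' hxa).comp (h := fun x => x ^ a) x
    (hasDerivAt_rpow_const (Or.inl hx.ne'))

lemma hasDerivAt_deriv_hbin_comp_rpow {p a x : ℝ} (hx : 0 < x) (hxa : x ^ a ≠ 1) :
    HasDerivAt (fun x => (logOdds (x ^ a) - logOdds p) * (a * x ^ (a - 1)))
      (a * x ^ (a - 2) * (a * (1 - x ^ a)⁻¹ + (a - 1) * (logOdds (x ^ a) - logOdds p))) x := by
  have hy := rpow_pos_of_pos hx a
  have h : HasDerivAt (fun x => (logOdds (x ^ a) - logOdds p) * (a * x ^ (a - 1))) _ x :=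
    (((hasDerivAt_logOdds hy.ne' hxa).comp x
      (hasDerivAt_rpow_const (Or.inl hx.ne'))).sub_const (logOdds p)).mul
      ((hasDerivAt_rpow_const (p := a - 1) (Or.inl hx.ne')).const_mul a)
  refine h.congr_deriv ?_
  have h1y : 1 - x ^ a ≠ 0 := sub_ne_zero.2 hxa.symm
  rw [Function.comp_apply, show a - 1 - 1 = a - 2 by ring, rpow_sub_one hx.ne', rpow_sub hx,
    rpow_two]
  field_simp
  ring

lemma iteratedDeriv_two_eq_of_hasDerivAt {f f' : ℝ → ℝ} {f'' x : ℝ}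
    (hf : ∀ᶠ y in 𝓝 x, HasDerivAt f (f' y) y) (hf' : HasDerivAt f' f'' x) :
    iteratedDeriv 2 f x = f'' := by
  rw [iteratedDeriv_succ, iteratedDeriv_one]
  exact EventuallyEq.deriv_eq (hf.mono fun y hy => hy.deriv) |>.trans hf'.deriv

lemma rpow_mem_Ioo_zero_one {x a : ℝ} (hx : x ∈ Ioo (0 : ℝ) 1) (ha : 0 < a) :
    x ^ a ∈ Ioo (0 : ℝ) 1 :=
  ⟨rpow_pos_of_pos hx.1 a, rpow_lt_one hx.1.le hx.2 ha⟩

lemma continuousOn_hbin_comp_rpow {p a : ℝ} (hp : p ∈ Ioo (0 : ℝ) 1) (ha : 0 < a) :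
    ContinuousOn (fun x => hbin p (x ^ a)) (Ioo 0 1) := fun _ hx =>
  (hasDerivAt_hbin_comp_rpow hp.1.ne' hp.2.ne hx.1
    (rpow_mem_Ioo_zero_one hx ha).2.ne).continuousAt.continuousWithinAt

lemma StrictAntiOn.exists_sign_change {f : ℝ → ℝ} {l a c : ℝ} (hf : StrictAntiOn f (Ioc l c))
    (hcont : ContinuousOn f (Icc a c)) (hla : l < a) (hac : a ≤ c) (hfa : 0 < f a)
    (hfc : f c < 0) :
    ∃ z ∈ Ioo a c, (∀ y ∈ Ioo l z, 0 < f y) ∧ ∀ y ∈ Ioc z c, f y < 0 := by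
  obtain ⟨z, hz, hfz⟩ := intermediate_value_Ioo' hac hcont ⟨hfc, hfa⟩
  have hz' : z ∈ Ioc l c := ⟨hla.trans hz.1, hz.2.le⟩
  refine ⟨z, hz, fun y hy => ?_, fun y hy => ?_⟩
  · exact hfz ▸ hf ⟨hy.1, hy.2.le.trans hz'.2⟩ hz' hy.2
  · exact hfz ▸ hf hz' ⟨hz'.1.trans hy.1, hy.2⟩ hy.1

lemma StrictMonoOn.exists_sign_change {f : ℝ → ℝ} {c b r : ℝ} (hf : StrictMonoOn f (Ico c r))
    (hcont : ContinuousOn f (Icc c b)) (hbr : b < r) (hcb : c ≤ b) (hfc : f c < 0)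
    (hfb : 0 < f b) :
    ∃ z ∈ Ioo c b, (∀ y ∈ Ico c z, f y < 0) ∧ ∀ y ∈ Ioo z r, 0 < f y := by
  obtain ⟨z, hz, hfz⟩ := intermediate_value_Ioo hcb hcont ⟨hfc, hfb⟩
  have hz' : z ∈ Ico c r := ⟨hz.1.le, hz.2.trans hbr⟩
  refine ⟨z, hz, fun y hy => ?_, fun y hy => ?_⟩
  · exact hfz ▸ hf ⟨hy.1, hy.2.trans hz'.2⟩ hz' hy.2
  · exact hfz ▸ hf hz' ⟨hz'.1.trans hy.1.le, hy.2⟩ hy.1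

noncomputable def curvatureFactor (γ p y : ℝ) : ℝ :=
  (1 - y)⁻¹ - (γ - 1) * (logOdds y - logOdds p)

lemma hasDerivAt_curvatureFactor (γ p : ℝ) {y : ℝ} (hy₀ : y ≠ 0) (hy₁ : y ≠ 1) :
    HasDerivAt (curvatureFactor γ p) ((γ * y - (γ - 1)) / (y * (1 - y) ^ 2)) y := by
  have h1y : 1 - y ≠ 0 := sub_ne_zero.2 hy₁.symm
  have h : HasDerivAt (curvatureFactor γ p) _ y :=
    (((hasDerivAt_id y).const_sub 1).inv h1y).sub
      (((hasDerivAt_logOdds hy₀ hy₁).sub_const (logOdds p)).const_mul (γ - 1))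
  refine h.congr_deriv ?_
  simp only [id]
  field_simp
  ring

lemma continuousOn_curvatureFactor (γ p : ℝ) : ContinuousOn (curvatureFactor γ p) (Ioo 0 1) :=
  fun _ hy => (hasDerivAt_curvatureFactor γ p hy.1.ne' hy.2.ne).continuousAt.continuousWithinAt

lemma strictAntiOn_curvatureFactor {γ : ℝ} (hγ : 0 < γ) (p : ℝ) :
    StrictAntiOn (curvatureFactor γ p) (Ioc 0 ((γ - 1) / γ)) := by
  have hc : (γ - 1) / γ < 1 := by rw [div_lt_one hγ]; linarith
  refine strictAntiOn_of_deriv_neg (convex_Ioc _ _)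
    ((continuousOn_curvatureFactor γ p).mono (Ioc_subset_Ioo_right hc)) fun y hy => ?_
  rw [interior_Ioc] at hy
  have hy₁ : y < 1 := hy.2.trans hc
  rw [(hasDerivAt_curvatureFactor γ p hy.1.ne' hy₁.ne).deriv]
  have := (lt_div_iff₀ hγ).1 hy.2
  exact div_neg_of_neg_of_pos (by linarith) (mul_pos hy.1 (pow_pos (by linarith) 2))

lemma strictMonoOn_curvatureFactor {γ : ℝ} (hγ : 1 < γ) (p : ℝ) :
    StrictMonoOn (curvatureFactor γ p) (Ico ((γ - 1) / γ) 1) := by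
  have hc : 0 < (γ - 1) / γ := div_pos (by linarith) (by linarith)
  refine strictMonoOn_of_deriv_pos (convex_Ico _ _)
    ((continuousOn_curvatureFactor γ p).mono (Ico_subset_Ioo_left hc)) fun y hy => ?_
  rw [interior_Ico] at hy
  have hy₀ : 0 < y := hc.trans hy.1
  rw [(hasDerivAt_curvatureFactor γ p hy₀.ne' hy.2.ne).deriv]
  have := (div_lt_iff₀ (by linarith)).1 hy.1
  exact div_pos (by linarith) (mul_pos hy₀ (pow_pos (by linarith [hy.2]) 2))

lemma curvatureFactor_self (γ p : ℝ) : curvatureFactor γ p p = (1 - p)⁻¹ := by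
  simp [curvatureFactor]

lemma curvatureFactor_neg {γ p : ℝ} (hγ : 1 < γ) (hp : p ∈ Ioo (0 : ℝ) 1)
    (hp0 : p < (γ - 1) / (γ - 1 + exp (γ / (γ - 1)))) :
    curvatureFactor γ p ((γ - 1) / γ) < 0 := by
  have hγ₁ : 0 < γ - 1 := by linarith
  have h1p : 0 < 1 - p := by linarith [hp.2]
  have h1c : 1 - (γ - 1) / γ = γ⁻¹ := by field_simp; ring
  have hodds : logOdds ((γ - 1) / γ) = log (γ - 1) := by
    rw [logOdds, h1c, log_div hγ₁.ne' (by positivity), log_inv]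
    ring
  have hexp : exp (γ / (γ - 1)) < (γ - 1) * (1 - p) / p := by
    rw [lt_div_iff₀ hp.1]
    rw [lt_div_iff₀ (by positivity)] at hp0
    linarith
  have hlog : γ / (γ - 1) < log (γ - 1) - logOdds p := by
    have hp₀ := hp.1
    rw [show log (γ - 1) - logOdds p = log ((γ - 1) * (1 - p) / p) by
      rw [log_div (by positivity) hp₀.ne', log_mul hγ₁.ne' h1p.ne', logOdds]; ring]
    exact (lt_log_iff_exp_lt (by positivity)).2 hexp
  rw [curvatureFactor, hodds, h1c, inv_inv]
  have := (div_lt_iff₀' hγ₁).1 hlog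
  linarith

lemma tendsto_inv_add_mul_log_nhdsGT_zero (k : ℝ) :
    Tendsto (fun t => t⁻¹ + k * log t) (𝓝[>] 0) atTop := by
  have h : Tendsto (fun t => 1 + k * (log t * t)) (𝓝[>] 0) (𝓝 1) := by
    simpa using ((tendsto_log_mul_rpow_nhdsGT_zero one_pos).const_mul k).const_add 1
  refine (tendsto_inv_nhdsGT_zero.atTop_mul_pos one_pos h).congr' ?_
  filter_upwards [self_mem_nhdsWithin] with t (ht : 0 < t)
  field_simp

lemma tendsto_curvatureFactor_nhdsLT_one (γ p : ℝ) :
    Tendsto (curvatureFactor γ p) (𝓝[<] 1) atTop := by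
  have hsub : Tendsto (fun y : ℝ => 1 - y) (𝓝[<] 1) (𝓝[>] 0) := by
    refine tendsto_nhdsWithin_of_tendsto_nhds_of_eventually_within _ ?_ ?_
    · exact tendsto_nhdsWithin_of_tendsto_nhds
        ((continuous_const.sub continuous_id).tendsto' 1 0 (sub_self 1))
    · filter_upwards [self_mem_nhdsWithin] with y (hy : y < 1)
      exact sub_pos.2 hy
  have hrest : Tendsto (fun y => (γ - 1) * (logOdds p - log y)) (𝓝[<] 1)
      (𝓝 ((γ - 1) * (logOdds p - log 1))) :=
    tendsto_nhdsWithin_of_tendsto_nhds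
      (((continuousAt_log one_ne_zero).tendsto.const_sub _).const_mul _)
  refine (((tendsto_inv_add_mul_log_nhdsGT_zero (γ - 1)).comp hsub).atTop_add hrest).congr
    fun y => ?_
  simp only [Function.comp_apply, curvatureFactor, logOdds]
  ring

lemma curvatureFactor_sign_pattern {γ p : ℝ} (hγ : 1 < γ) (hp : p ∈ Ioo (0 : ℝ) 1)
    (hp0 : p < (γ - 1) / (γ - 1 + exp (γ / (γ - 1)))) :
    ∃ z₁ z₂, p < z₁ ∧ z₁ < z₂ ∧ z₂ < 1 ∧ (∀ y ∈ Ioo 0 z₁, 0 < curvatureFactor γ p y) ∧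
      (∀ y ∈ Ioo z₁ z₂, curvatureFactor γ p y < 0) ∧
      ∀ y ∈ Ioo z₂ 1, 0 < curvatureFactor γ p y := by
  have hγ₀ : 0 < γ := by linarith
  set c := (γ - 1) / γ with hc
  have hc₀ : 0 < c := div_pos (by linarith) hγ₀
  have hc₁ : c < 1 := by rw [div_lt_one hγ₀]; linarith
  have hpc : p < c := hp0.trans_le <| div_le_div_of_nonneg_left (by linarith) hγ₀ <| by
    linarith [add_one_le_exp (γ / (γ - 1)), div_pos hγ₀ (by linarith : 0 < γ - 1)]
  have hgc : curvatureFactor γ p c < 0 := curvatureFactor_neg hγ hp hp0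
  have hgp : 0 < curvatureFactor γ p p := by
    rw [curvatureFactor_self]; exact inv_pos.2 (sub_pos.2 hp.2)
  obtain ⟨b, hgb, hb⟩ := (((tendsto_curvatureFactor_nhdsLT_one γ p).eventually_gt_atTop 0).and
    (Ioo_mem_nhdsLT hc₁)).exists
  have hcont := continuousOn_curvatureFactor γ p
  obtain ⟨z₁, hz₁, hpos₁, hneg₁⟩ := (strictAntiOn_curvatureFactor hγ₀ p).exists_sign_change
    (hcont.mono (Icc_subset_Ioo hp.1 hc₁)) hp.1 hpc.le hgp hgc
  obtain ⟨z₂, hz₂, hneg₂, hpos₂⟩ := (strictMonoOn_curvatureFactor hγ p).exists_sign_change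
    (hcont.mono (Icc_subset_Ioo hc₀ hb.2)) hb.2 hb.1.le hgc hgb
  refine ⟨z₁, z₂, hz₁.1, hz₁.2.trans hz₂.1, hz₂.2.trans hb.2, hpos₁, fun y hy => ?_, hpos₂⟩
  rcases le_or_gt y c with h | h
  · exact hneg₁ y ⟨hy.1, h⟩
  · exact hneg₂ y ⟨h.le, hy.2⟩

lemma iteratedDeriv_two_hbin_comp_rpow_inv {γ p x : ℝ} (hγ : 0 < γ) (hp : p ∈ Ioo (0 : ℝ) 1)
    (hx : x ∈ Ioo (0 : ℝ) 1) :
    iteratedDeriv 2 (fun x => hbin p (x ^ (1 / γ))) x =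
      x ^ (1 / γ - 2) / γ ^ 2 * curvatureFactor γ p (x ^ (1 / γ)) := by
  have hγ' : 0 < 1 / γ := one_div_pos.2 hγ
  have hφ' : ∀ᶠ y in 𝓝 x, HasDerivAt (fun x => hbin p (x ^ (1 / γ)))
      ((logOdds (y ^ (1 / γ)) - logOdds p) * (1 / γ * y ^ (1 / γ - 1))) y := by
    filter_upwards [Ioo_mem_nhds hx.1 hx.2] with y hy
    exact hasDerivAt_hbin_comp_rpow hp.1.ne' hp.2.ne hy.1 (rpow_mem_Ioo_zero_one hy hγ').2.ne
  rw [iteratedDeriv_two_eq_of_hasDerivAt hφ'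
    (hasDerivAt_deriv_hbin_comp_rpow hx.1 (rpow_mem_Ioo_zero_one hx hγ').2.ne), curvatureFactor]
  field_simp
  ring

lemma rpow_one_div_mem_Ioo {γ u v x : ℝ} (hγ : 0 < γ) (hu : 0 ≤ u) (hv : 0 ≤ v)
    (hx : x ∈ Ioo (u ^ γ) (v ^ γ)) : x ^ (1 / γ) ∈ Ioo u v := by
  have hx₀ : 0 ≤ x := (rpow_nonneg hu γ).trans hx.1.le
  rw [one_div]
  exact ⟨(lt_rpow_inv_iff_of_pos hu hx₀ hγ).2 hx.1, (rpow_inv_lt_iff_of_pos hx₀ hv hγ).2 hx.2⟩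

lemma Ioo_rpow_subset_Ioo_zero_one {γ u v : ℝ} (hγ : 0 < γ) (hu : 0 ≤ u) (hv₀ : 0 ≤ v)
    (hv₁ : v ≤ 1) : Ioo (u ^ γ) (v ^ γ) ⊆ Ioo 0 1 :=
  Ioo_subset_Ioo (rpow_nonneg hu γ) (rpow_le_one hv₀ hv₁ hγ.le)

lemma convexOn_hbin_comp_rpow_inv_of_curvatureFactor_pos {γ p u v : ℝ} (hγ : 0 < γ)
    (hp : p ∈ Ioo (0 : ℝ) 1) (hu : 0 ≤ u) (hv₀ : 0 ≤ v) (hv₁ : v ≤ 1)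
    (hg : ∀ y ∈ Ioo u v, 0 < curvatureFactor γ p y) :
    (∀ x ∈ Ioo (u ^ γ) (v ^ γ), 0 < iteratedDeriv 2 (fun x => hbin p (x ^ (1 / γ))) x) ∧
      ConvexOn ℝ (Ioo (u ^ γ) (v ^ γ)) (fun x => hbin p (x ^ (1 / γ))) := by
  have hsub := Ioo_rpow_subset_Ioo_zero_one hγ hu hv₀ hv₁
  have hφ'' : ∀ x ∈ Ioo (u ^ γ) (v ^ γ),
      0 < iteratedDeriv 2 (fun x => hbin p (x ^ (1 / γ))) x := by
    intro x hx
    have hx₀ := rpow_pos_of_pos (hsub hx).1 (1 / γ - 2)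
    rw [iteratedDeriv_two_hbin_comp_rpow_inv hγ hp (hsub hx)]
    exact mul_pos (by positivity) (hg _ (rpow_one_div_mem_Ioo hγ hu hv₀ hx))
  refine ⟨hφ'', (strictConvexOn_of_deriv2_pos' (convex_Ioo _ _)
    ((continuousOn_hbin_comp_rpow hp (one_div_pos.2 hγ)).mono hsub) fun x hx => ?_).convexOn⟩
  rw [← iteratedDeriv_eq_iterate]
  exact hφ'' x hx

lemma concaveOn_hbin_comp_rpow_inv_of_curvatureFactor_neg {γ p u v : ℝ} (hγ : 0 < γ)
    (hp : p ∈ Ioo (0 : ℝ) 1) (hu : 0 ≤ u) (hv₀ : 0 ≤ v) (hv₁ : v ≤ 1)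
    (hg : ∀ y ∈ Ioo u v, curvatureFactor γ p y < 0) :
    (∀ x ∈ Ioo (u ^ γ) (v ^ γ), iteratedDeriv 2 (fun x => hbin p (x ^ (1 / γ))) x < 0) ∧
      ConcaveOn ℝ (Ioo (u ^ γ) (v ^ γ)) (fun x => hbin p (x ^ (1 / γ))) := by
  have hsub := Ioo_rpow_subset_Ioo_zero_one hγ hu hv₀ hv₁
  have hφ'' : ∀ x ∈ Ioo (u ^ γ) (v ^ γ),
      iteratedDeriv 2 (fun x => hbin p (x ^ (1 / γ))) x < 0 := by
    intro x hx
    have hx₀ := rpow_pos_of_pos (hsub hx).1 (1 / γ - 2)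
    rw [iteratedDeriv_two_hbin_comp_rpow_inv hγ hp (hsub hx)]
    exact mul_neg_of_pos_of_neg (by positivity) (hg _ (rpow_one_div_mem_Ioo hγ hu hv₀ hx))
  refine ⟨hφ'', (strictConcaveOn_of_deriv2_neg' (convex_Ioo _ _)
    ((continuousOn_hbin_comp_rpow hp (one_div_pos.2 hγ)).mono hsub) fun x hx => ?_).concaveOn⟩
  rw [← iteratedDeriv_eq_iterate]
  exact hφ'' x hx

/-- For `γ > 1` and `p < p₀(γ)`, the function `φ(x) = h_p(x^{1/γ})` has exactly two
inflection points `x₁ < x₂`, both to the right of `p^γ`: its second derivative is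
positive on `(0,x₁)`, negative on `(x₁,x₂)` and positive on `(x₂,1)`; so `φ` is
convex, then concave, then convex. -/
theorem hbin_rpow_two_inflection_points
    (γ : ℝ) (hγ : 1 < γ)
    (p : ℝ) (hp : p ∈ Set.Ioo (0 : ℝ) 1)
    (hp0 : p < (γ - 1) / (γ - 1 + Real.exp (γ / (γ - 1)))) :
    ∃ x₁ x₂ : ℝ, p ^ γ < x₁ ∧ x₁ < x₂ ∧ x₂ < 1 ∧
      (∀ x ∈ Set.Ioo (0 : ℝ) x₁,
        0 < iteratedDeriv 2 (fun x => hbin p (x ^ (1 / γ))) x) ∧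
      (∀ x ∈ Set.Ioo x₁ x₂,
        iteratedDeriv 2 (fun x => hbin p (x ^ (1 / γ))) x < 0) ∧
      (∀ x ∈ Set.Ioo x₂ (1 : ℝ),
        0 < iteratedDeriv 2 (fun x => hbin p (x ^ (1 / γ))) x) ∧
      ConvexOn ℝ (Set.Ioo (0 : ℝ) x₁) (fun x => hbin p (x ^ (1 / γ))) ∧
      ConcaveOn ℝ (Set.Ioo x₁ x₂) (fun x => hbin p (x ^ (1 / γ))) ∧
      ConvexOn ℝ (Set.Ioo x₂ (1 : ℝ)) (fun x => hbin p (x ^ (1 / γ))) := by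
  have hγ₀ : 0 < γ := by linarith
  obtain ⟨z₁, z₂, hpz₁, hz₁₂, hz₂₁, hg₁, hg₂, hg₃⟩ := curvatureFactor_sign_pattern hγ hp hp0
  have hz₁ : 0 < z₁ := hp.1.trans hpz₁
  have hz₂₀ : 0 < z₂ := hz₁.trans hz₁₂
  have h₁ := convexOn_hbin_comp_rpow_inv_of_curvatureFactor_pos hγ₀ hp le_rfl hz₁.le
    (hz₁₂.trans hz₂₁).le hg₁
  have h₂ := concaveOn_hbin_comp_rpow_inv_of_curvatureFactor_neg hγ₀ hp hz₁.le hz₂₀.le hz₂₁.le hg₂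
  have h₃ := convexOn_hbin_comp_rpow_inv_of_curvatureFactor_pos hγ₀ hp hz₂₀.le zero_le_one le_rfl
    hg₃
  rw [zero_rpow hγ₀.ne'] at h₁
  rw [one_rpow] at h₃
  exact ⟨z₁ ^ γ, z₂ ^ γ, rpow_lt_rpow hp.1.le hpz₁ hγ₀, rpow_lt_rpow hz₁.le hz₁₂ hγ₀,
    rpow_lt_one hz₂₀.le hz₂₁ hγ₀, h₁.1, h₂.1, h₃.1, h₁.2, h₂.2, h₃.2⟩
end
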